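/- arXiv:math/0511325 — 11 statements merged into one kernel-verified Lean document; each statement's English description precedes it below -/
import Mathlib

section
/- Let f(z) = ∑_{j=0}^∞ a_j z^j be an entire function with real coefficients that preserves nonnegativity of n×n matrices (f ∈ F_n). Then a_j ≥ 0 for j = 0, 1, …, n−1. -/
/-!
Evaluate `f` at the nilpotent upper shift matrix `J` of size `n`: since `J ^ n = 0`, the series
`f(J)` is the finite sum `∑_{j<n} a_j J^j`, and `J^j` has ones exactly on the `j`-th superdiagonal.
So the `(0, j)` entry of `f(J)` is `a_j`, and it is nonnegative because `J` is.
-/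

/-- `f(A) := ∑_{j=0}^∞ a_j A^j` for a square real matrix `A`. -/
noncomputable def fmat (a : ℕ → ℝ) {m : Type*} [Fintype m] [DecidableEq m]
    (A : Matrix m m ℝ) : Matrix m m ℝ :=
  ∑' j : ℕ, a j • A ^ j

open Finset

theorem fmat_eq_sum_of_pow_eq_zero (a : ℕ → ℝ) {m : Type*} [Fintype m] [DecidableEq m]
    {A : Matrix m m ℝ} {N : ℕ} (hA : A ^ N = 0) :
    fmat a A = ∑ j ∈ range N, a j • A ^ j :=
  tsum_eq_sum fun j hj => by
    rw [pow_eq_zero_of_le (not_lt.mp (mem_range.not.mp hj)) hA, smul_zero]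

def shiftMatrix (R : Type*) [Zero R] [One R] (n : ℕ) : Matrix (Fin n) (Fin n) R :=
  Matrix.of fun i k => if (k : ℕ) = i + 1 then 1 else 0

section shiftMatrix

variable {R : Type*} {n : ℕ}

theorem shiftMatrix_apply [Zero R] [One R] (i k : Fin n) :
    shiftMatrix R n i k = if (k : ℕ) = i + 1 then 1 else 0 := rfl

theorem shiftMatrix_nonneg [Zero R] [One R] [Preorder R] [ZeroLEOneClass R] (i k : Fin n) :
    0 ≤ shiftMatrix R n i k := by
  rw [shiftMatrix_apply]
  split_ifs <;> simp

theorem shiftMatrix_pow_apply [Semiring R] (m : ℕ) (i k : Fin n) :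
    (shiftMatrix R n ^ m) i k = if (k : ℕ) = i + m then 1 else 0 := by
  induction m generalizing k with
  | zero => simp [Matrix.one_apply, Fin.ext_iff, eq_comm]
  | succ m ih =>
    simp only [pow_succ, Matrix.mul_apply, ih, shiftMatrix_apply, mul_ite, mul_one, mul_zero]
    by_cases hk : (k : ℕ) = i + (m + 1)
    · have hlt : (i : ℕ) + m < n := by omega
      rw [if_pos hk, sum_eq_single ⟨i + m, hlt⟩ (fun l _ hl => ?_) (by simp)]
      · simp [hk, Nat.add_assoc]
      · rw [if_neg (fun hl' => hl (Fin.ext hl')), ite_self]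
    · rw [if_neg hk]
      refine sum_eq_zero fun l _ => ?_
      split_ifs <;> first | rfl | omega

theorem shiftMatrix_pow_eq_zero [Semiring R] : shiftMatrix R n ^ n = 0 := by
  ext i k
  rw [shiftMatrix_pow_apply, if_neg (by omega)]
  rfl

end shiftMatrix

theorem fmat_shiftMatrix_apply (a : ℕ → ℝ) {n j : ℕ} (hj : j < n) :
    fmat a (shiftMatrix ℝ n) ⟨0, by omega⟩ ⟨j, hj⟩ = a j := by
  rw [fmat_eq_sum_of_pow_eq_zero a shiftMatrix_pow_eq_zero]
  simp [Matrix.sum_apply, shiftMatrix_pow_apply, hj]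

theorem stmt_1_general (a : ℕ → ℝ) (n : ℕ)
    (h : ∀ A : Matrix (Fin n) (Fin n) ℝ,
      (∀ i j, 0 ≤ A i j) → ∀ i j, 0 ≤ fmat a A i j) :
    ∀ j < n, 0 ≤ a j := fun j hj =>
  fmat_shiftMatrix_apply a hj ▸ h _ shiftMatrix_nonneg _ _

/-- If `f ∈ F_n` then the first `n` Taylor coefficients of `f` are nonnegative. -/
theorem stmt_1 (a : ℕ → ℝ) (ha : ∀ r : ℝ, Summable fun j : ℕ => |a j| * r ^ j)
    (n : ℕ) (hn : 0 < n)
    (h : ∀ A : Matrix (Fin n) (Fin n) ℝ,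
      (∀ i j, 0 ≤ A i j) → ∀ i j, 0 ≤ fmat a A i j) :
    ∀ j < n, 0 ≤ a j :=
  stmt_1_general a n h
end

section
/- An entire function f(z) = ∑_{j=0}^∞ a_j z^j with real coefficients belongs to F_n for every positive integer n (i.e., preserves nonnegativity of matrices of every order) if and only if a_j ≥ 0 for all j ∈ ℕ. -/
lemma pow_entry_nonneg {n : ℕ} {A : Matrix (Fin n) (Fin n) ℝ}
    (hA : ∀ i j, 0 ≤ A i j) (k : ℕ) : ∀ i j, 0 ≤ (A ^ k) i j := by
  induction k with
  | zero =>
    intro i j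
    rw [pow_zero, Matrix.one_apply]
    split <;> norm_num
  | succ k ih =>
    intro i j
    rw [pow_succ, Matrix.mul_apply]
    exact Finset.sum_nonneg fun m _ => mul_nonneg (ih i m) (hA m j)

/-- The nilpotent shift matrix. -/
noncomputable def Nmat (n : ℕ) : Matrix (Fin n) (Fin n) ℝ :=
  Matrix.of fun i l => if (i : ℕ) + 1 = (l : ℕ) then 1 else 0

lemma Nmat_pow (n k : ℕ) (i l : Fin n) :
    ((Nmat n) ^ k) i l = if (i : ℕ) + k = (l : ℕ) then 1 else 0 := by
  induction k generalizing l with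
  | zero =>
    simp [Matrix.one_apply, Fin.ext_iff]
  | succ k ih =>
    rw [pow_succ, Matrix.mul_apply]
    simp only [ih]
    simp only [Nmat, Matrix.of_apply]
    by_cases h : (i : ℕ) + (k + 1) = (l : ℕ)
    · rw [if_pos h]
      have hlt : (i : ℕ) + k < n := by omega
      rw [Finset.sum_eq_single (⟨(i : ℕ) + k, hlt⟩ : Fin n)
        (fun b _ hb => by
          have hne : (i : ℕ) + k ≠ (b : ℕ) := fun hc => hb (Fin.ext hc.symm)
          simp [hne])
        (fun hmem => absurd (Finset.mem_univ _) hmem)]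
      have : ((⟨(i : ℕ) + k, hlt⟩ : Fin n) : ℕ) + 1 = (l : ℕ) := by simp; omega
      simp [this]
    · rw [if_neg h]
      apply Finset.sum_eq_zero
      intro m _
      rcases eq_or_ne ((i : ℕ) + k) ((m : ℕ)) with hm | hm
      · have h2 : (m : ℕ) + 1 ≠ (l : ℕ) := by omega
        simp [h2]
      · simp [hm]

lemma fmat_apply {m : Type*} [Fintype m] [DecidableEq m] (a : ℕ → ℝ)
    (A : Matrix m m ℝ) (h : Summable fun k : ℕ => a k • A ^ k) (i j : m) :
    fmat a A i j = ∑' k : ℕ, a k * (A ^ k) i j := by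
  unfold fmat
  erw [tsum_apply h, tsum_apply (Pi.summable.mp h i)]
  exact tsum_congr fun k => by simp [Matrix.smul_apply]

/-- `f ∈ F_n` for every positive integer `n` iff all Taylor coefficients
of `f` are nonnegative. -/
theorem stmt_2 (a : ℕ → ℝ) (ha : ∀ r : ℝ, Summable fun j : ℕ => |a j| * r ^ j) :
    (∀ n : ℕ, 0 < n → ∀ A : Matrix (Fin n) (Fin n) ℝ,
      (∀ i j, 0 ≤ A i j) → ∀ i j, 0 ≤ fmat a A i j) ↔
    (∀ j : ℕ, 0 ≤ a j) := by
  constructor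
  · intro H j
    have h1 : Summable fun k : ℕ => |a k| := by simpa using ha 1
    have hent : ∀ i l : Fin (j + 1), Summable fun k : ℕ => a k * ((Nmat (j + 1)) ^ k) i l := by
      intro i l
      apply Summable.of_abs
      apply Summable.of_nonneg_of_le (fun k => abs_nonneg _) _ h1
      intro k
      rw [Nmat_pow, abs_mul]
      split <;> simp [abs_nonneg]
    have hsum : Summable fun k : ℕ => a k • (Nmat (j + 1)) ^ k :=
      Pi.summable.mpr fun i => Pi.summable.mpr fun l => by
        simpa [Matrix.smul_apply] using hent i l
    have hNN : ∀ i l : Fin (j + 1), 0 ≤ Nmat (j + 1) i l := by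
      intro i l
      unfold Nmat
      simp only [Matrix.of_apply]
      split <;> norm_num
    have key := H (j + 1) (Nat.succ_pos j) (Nmat (j + 1)) hNN 0 (Fin.last j)
    rw [fmat_apply a _ hsum] at key
    have : (fun k : ℕ => a k * ((Nmat (j + 1)) ^ k) 0 (Fin.last j)) =
        fun k : ℕ => if k = j then a j else 0 := by
      funext k
      rw [Nmat_pow]
      simp only [Fin.val_zero, Fin.val_last, zero_add]
      by_cases hk : k = j
      · simp [hk]
      · simp [hk]
    rw [this, tsum_ite_eq] at key
    exact key
  · intro hpos n hn A hA i l
    by_cases hs : Summable fun k : ℕ => a k • A ^ k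
    · rw [fmat_apply a A hs]
      exact tsum_nonneg fun k => mul_nonneg (hpos k) (pow_entry_nonneg hA k i l)
    · unfold fmat
      rw [tsum_eq_zero_of_not_summable hs]
      simp
end

section
/- An entire function f (with real Taylor coefficients) belongs to F_n if and only if f(A) is entrywise nonnegative for every entrywise strictly positive real n×n matrix A. -/
attribute [local instance] Matrix.linftyOpNormedRing Matrix.linftyOpNormedSpace
  Matrix.linfty_opNormOneClass

open Filter Topology

section aux

variable {m : Type*} [Fintype m] [DecidableEq m]

lemma abs_entry_le_norm (X : Matrix m m ℝ) (i j : m) : |X i j| ≤ ‖X‖ := by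
  rw [Matrix.linfty_opNorm_def]
  calc |X i j| ≤ ∑ j', ‖X i j'‖ :=
        Finset.single_le_sum (f := fun j' => ‖X i j'‖) (fun _ _ => norm_nonneg _)
          (Finset.mem_univ j)
    _ ≤ _ := by
        have h := Finset.le_sup (f := fun i : m => ∑ j' : m, ‖X i j'‖₊) (Finset.mem_univ i)
        have h2 := NNReal.coe_le_coe.2 h
        simpa [NNReal.coe_sum] using h2

lemma summable_fmat_aux (a : ℕ → ℝ) (ha : ∀ r : ℝ, Summable fun j : ℕ => |a j| * r ^ j)
    [Nonempty m] (A : Matrix m m ℝ) : Summable fun k : ℕ => a k • A ^ k := by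
  refine Summable.of_norm_bounded (ha ‖A‖) fun k => ?_
  calc ‖a k • A ^ k‖ ≤ ‖a k‖ * ‖A ^ k‖ := norm_smul_le _ _
    _ ≤ |a k| * ‖A‖ ^ k := by
        rw [Real.norm_eq_abs]
        exact mul_le_mul_of_nonneg_left (norm_pow_le _ _) (abs_nonneg _)

lemma hasSum_entry {f : ℕ → Matrix m m ℝ} {S : Matrix m m ℝ} (h : HasSum f S) (i j : m) :
    HasSum (fun k => f k i j) (S i j) :=
  h.map (AddMonoidHom.mk' (fun X : Matrix m m ℝ => X i j) (fun _ _ => rfl))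
    ((continuous_apply j).comp (continuous_apply i))

lemma fmat_apply_aux (a : ℕ → ℝ) (ha : ∀ r : ℝ, Summable fun j : ℕ => |a j| * r ^ j)
    [Nonempty m] (A : Matrix m m ℝ) (i j : m) :
    fmat a A i j = ∑' k : ℕ, a k * (A ^ k) i j := by
  have h := (summable_fmat_aux a ha A).hasSum
  have h2 := hasSum_entry h i j
  simpa [fmat, Matrix.smul_apply, smul_eq_mul] using h2.tsum_eq.symm

end aux

/-- `f ∈ F_n` iff `f(A)` is entrywise nonnegative for every entrywise strictly
positive real n×n matrix `A`. -/
theorem stmt_4 (a : ℕ → ℝ) (ha : ∀ r : ℝ, Summable fun j : ℕ => |a j| * r ^ j)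
    (n : ℕ) (hn : 0 < n) :
    (∀ A : Matrix (Fin n) (Fin n) ℝ,
      (∀ i j, 0 ≤ A i j) → ∀ i j, 0 ≤ fmat a A i j) ↔
    (∀ A : Matrix (Fin n) (Fin n) ℝ,
      (∀ i j, 0 < A i j) → ∀ i j, 0 ≤ fmat a A i j) := by
  haveI : Nonempty (Fin n) := ⟨⟨0, hn⟩⟩
  constructor
  · intro h A hA i j
    exact h A (fun i j => (hA i j).le) i j
  · intro h A hA i j
    -- approximate A by strictly positive matrices
    set J : Matrix (Fin n) (Fin n) ℝ := Matrix.of fun _ _ => (1 : ℝ) with hJ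
    set B : ℕ → Matrix (Fin n) (Fin n) ℝ := fun m => A + ((m : ℝ) + 1)⁻¹ • J with hB
    have hBpos : ∀ m, ∀ i j, 0 < B m i j := by
      intro m i j
      have : (0 : ℝ) < ((m : ℝ) + 1)⁻¹ := by positivity
      simpa [hB, hJ] using add_pos_of_nonneg_of_pos (hA i j) this
    have hnonneg : ∀ m, 0 ≤ fmat a (B m) i j := fun m => h (B m) (hBpos m) i j
    -- B m tends to A
    have hBt : Tendsto B atTop (𝓝 A) := by
      have h0 : Tendsto (fun m : ℕ => ((m : ℝ) + 1)⁻¹) atTop (𝓝 0) := by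
        simpa using tendsto_one_div_add_atTop_nhds_zero_nat (𝕜 := ℝ)
      have : Tendsto (fun m : ℕ => A + ((m : ℝ) + 1)⁻¹ • J) atTop (𝓝 (A + (0 : ℝ) • J)) :=
        tendsto_const_nhds.add (h0.smul tendsto_const_nhds)
      simpa [hB] using this
    -- norm bound on B m
    have hBle : ∀ m, ‖B m‖ ≤ ‖A‖ + ‖J‖ := by
      intro m
      calc ‖B m‖ ≤ ‖A‖ + ‖((m : ℝ) + 1)⁻¹ • J‖ := norm_add_le _ _
        _ ≤ ‖A‖ + ‖((m : ℝ) + 1)⁻¹‖ * ‖J‖ := by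
            gcongr; exact norm_smul_le _ _
        _ ≤ ‖A‖ + 1 * ‖J‖ := by
            gcongr
            rw [Real.norm_eq_abs, abs_of_pos (by positivity)]
            rw [inv_le_one_iff₀]
            right; linarith [Nat.cast_nonneg (α := ℝ) m]
        _ = ‖A‖ + ‖J‖ := by ring
    set R : ℝ := ‖A‖ + ‖J‖ with hR
    -- dominated convergence
    have key : Tendsto (fun m => fmat a (B m) i j) atTop (𝓝 (fmat a A i j)) := by
      rw [fmat_apply_aux a ha A i j]
      have := tendsto_tsum_of_dominated_convergence
        (f := fun m k => a k * ((B m) ^ k) i j)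
        (g := fun k => a k * (A ^ k) i j)
        (bound := fun k => |a k| * R ^ k) (ha R)
        (fun k => by
          have hc : Continuous fun X : Matrix (Fin n) (Fin n) ℝ => a k * (X ^ k) i j :=
            continuous_const.mul ((continuous_apply j).comp
              ((continuous_apply i).comp (continuous_pow k)))
          exact (hc.tendsto A).comp hBt)
        (Eventually.of_forall fun mm => by
          intro k
          have h1 : |((B mm) ^ k) i j| ≤ ‖(B mm) ^ k‖ := abs_entry_le_norm _ i j
          have h2 : ‖(B mm) ^ k‖ ≤ ‖B mm‖ ^ k := norm_pow_le _ _
          have h3 : ‖B mm‖ ^ k ≤ R ^ k :=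
            pow_le_pow_left₀ (norm_nonneg _) (hBle mm) k
          rw [Real.norm_eq_abs, abs_mul]
          exact mul_le_mul_of_nonneg_left (h1.trans (h2.trans h3)) (abs_nonneg _))
      convert this using 2 with m
      exact fmat_apply_aux a ha (B m) i j
    exact ge_of_tendsto' key hnonneg
end

section
/- Let f be an entire function with real coefficients, let A be an n1×n1, B an n1×n2, and C an n2×n2 real matrix, and suppose X is an n1×n2 real matrix satisfying the Sylvester equation A·X − X·C = B. Let M be the (n1+n2)×(n1+n2) block upper-triangular matrix with blocks [[A, B], [0, C]]. Then f(M) is the block matrix [[f(A), f(A)·X − X·f(C)], [0, f(C)]]. -/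
attribute [local instance] Matrix.linftyOpNormedAddCommGroup Matrix.linftyOpNormedRing
  Matrix.linftyOpNormedSpace Matrix.linftyOpNormedAlgebra

lemma norm_pow_le_aux {m : Type*} [Fintype m] [DecidableEq m] (M : Matrix m m ℝ) (j : ℕ) :
    ‖M ^ j‖ ≤ max 1 ‖M‖ ^ j := by
  induction j with
  | zero =>
    rw [pow_zero, pow_zero]
    rcases isEmpty_or_nonempty m with h | h
    · have : (1 : Matrix m m ℝ) = 0 := Subsingleton.elim _ _
      simp [this]
    · simp
  | succ j ih =>
    rw [pow_succ, pow_succ]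
    calc ‖M ^ j * M‖ ≤ ‖M ^ j‖ * ‖M‖ := norm_mul_le _ _
    _ ≤ max 1 ‖M‖ ^ j * max 1 ‖M‖ := by
        apply mul_le_mul ih (le_max_right _ _) (norm_nonneg _)
        positivity

lemma summable_aux (a : ℕ → ℝ) (ha : ∀ r : ℝ, Summable fun j : ℕ => |a j| * r ^ j)
    {m : Type*} [Fintype m] [DecidableEq m] (M : Matrix m m ℝ) :
    Summable fun j : ℕ => a j • M ^ j := by
  apply Summable.of_norm_bounded (ha (max 1 ‖M‖))
  intro j
  rw [norm_smul, Real.norm_eq_abs]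
  exact mul_le_mul_of_nonneg_left (norm_pow_le_aux M j) (abs_nonneg _)

lemma hasSum_fmat (a : ℕ → ℝ) (ha : ∀ r : ℝ, Summable fun j : ℕ => |a j| * r ^ j)
    {m : Type*} [Fintype m] [DecidableEq m] (M : Matrix m m ℝ) :
    HasSum (fun j : ℕ => a j • M ^ j) (fmat a M) :=
  (summable_aux a ha M).hasSum

/-- the linear "block diagonal" map as a continuous linear map -/
noncomputable def blockCLM (n1 n2 : ℕ) :
    (Matrix (Fin n1) (Fin n1) ℝ × Matrix (Fin n2) (Fin n2) ℝ) →L[ℝ]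
      Matrix (Fin n1 ⊕ Fin n2) (Fin n1 ⊕ Fin n2) ℝ :=
  LinearMap.toContinuousLinearMap
    { toFun := fun p => Matrix.fromBlocks p.1 0 0 p.2
      map_add' := by
        intro p q
        ext i j
        cases i <;> cases j <;> simp
      map_smul' := by
        intro c p
        ext i j
        cases i <;> cases j <;> simp }

/-- If `X` solves the Sylvester equation `AX - XC = B`, then
`f([[A,B],[0,C]]) = [[f(A), f(A)X - Xf(C)], [0, f(C)]]`. -/
theorem stmt_7 (a : ℕ → ℝ) (ha : ∀ r : ℝ, Summable fun j : ℕ => |a j| * r ^ j)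
    (n1 n2 : ℕ)
    (A : Matrix (Fin n1) (Fin n1) ℝ) (B : Matrix (Fin n1) (Fin n2) ℝ)
    (C : Matrix (Fin n2) (Fin n2) ℝ) (X : Matrix (Fin n1) (Fin n2) ℝ)
    (hX : A * X - X * C = B) :
    fmat a (Matrix.fromBlocks A B 0 C) =
      Matrix.fromBlocks (fmat a A) (fmat a A * X - X * fmat a C) 0 (fmat a C) := by
  set S : Matrix (Fin n1 ⊕ Fin n2) (Fin n1 ⊕ Fin n2) ℝ := Matrix.fromBlocks 1 X 0 1 with hS
  set S' : Matrix (Fin n1 ⊕ Fin n2) (Fin n1 ⊕ Fin n2) ℝ := Matrix.fromBlocks 1 (-X) 0 1 with hS'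
  set D : Matrix (Fin n1 ⊕ Fin n2) (Fin n1 ⊕ Fin n2) ℝ := Matrix.fromBlocks A 0 0 C with hD
  have hSS' : S * S' = 1 := by
    simp [hS, hS', Matrix.fromBlocks_multiply, ← Matrix.fromBlocks_one]
  have hS'S : S' * S = 1 := by
    simp [hS, hS', Matrix.fromBlocks_multiply, ← Matrix.fromBlocks_one]
  have hM : Matrix.fromBlocks A B 0 C = S' * D * S := by
    rw [← hX]
    simp [hS, hS', hD, Matrix.fromBlocks_multiply, sub_eq_add_neg, Matrix.neg_mul]
  -- powers of D
  have hDpow : ∀ j : ℕ, D ^ j = Matrix.fromBlocks (A ^ j) 0 0 (C ^ j) := by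
    intro j
    induction j with
    | zero => simp [Matrix.fromBlocks_one]
    | succ j ih => rw [pow_succ, ih, hD, Matrix.fromBlocks_multiply]; simp [← pow_succ]
  -- powers of M
  have hMpow : ∀ j : ℕ, (S' * D * S) ^ j = S' * D ^ j * S := by
    intro j
    induction j with
    | zero => simpa using hS'S.symm
    | succ j ih =>
      rw [pow_succ, ih, pow_succ]
      calc S' * D ^ j * S * (S' * D * S) = S' * D ^ j * (S * S') * D * S := by
            noncomm_ring
      _ = S' * (D ^ j * D) * S := by rw [hSS']; noncomm_ring
  -- fmat of D is block diagonal
  have hfD : fmat a D = Matrix.fromBlocks (fmat a A) 0 0 (fmat a C) := by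
    have h1 := hasSum_fmat a ha A
    have h2 := hasSum_fmat a ha C
    have h3 := ((h1.prodMk h2).mapL (blockCLM n1 n2))
    have h4 : HasSum (fun j : ℕ => a j • D ^ j)
        (Matrix.fromBlocks (fmat a A) 0 0 (fmat a C)) := by
      convert h3 using 2 with j
      · rw [hDpow j]
        show _ = Matrix.fromBlocks (a j • A ^ j) 0 0 (a j • C ^ j)
        ext i k
        cases i <;> cases k <;> simp
      · rfl
    exact h4.tsum_eq
  -- conjugation
  have key : fmat a (Matrix.fromBlocks A B 0 C) = S' * fmat a D * S := by
    rw [hM]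
    unfold fmat
    have hsum : Summable fun j : ℕ => a j • D ^ j := summable_aux a ha D
    calc (∑' j : ℕ, a j • (S' * D * S) ^ j)
        = ∑' j : ℕ, S' * ((a j • D ^ j) * S) := by
          congr 1; funext j
          rw [hMpow j, mul_assoc, Matrix.smul_mul, Matrix.mul_smul]
      _ = S' * ∑' j : ℕ, (a j • D ^ j) * S := by
          exact (hsum.mul_right S).tsum_mul_left S'
      _ = S' * (∑' j : ℕ, a j • D ^ j) * S := by
          rw [hsum.tsum_mul_right S, mul_assoc]
  rw [key, hfD]
  rw [hS, hS', Matrix.fromBlocks_multiply, Matrix.fromBlocks_multiply]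
  congr 1 <;> simp [Matrix.mul_sub, Matrix.sub_mul] <;> abel
end

section
/- Let n ≥ 1 and ω = e^{2πi/n}. An entire function f(z) = ∑_{j=0}^∞ a_j z^j with real coefficients preserves nonnegativity of circulant n×n matrices — i.e., f(A) is entrywise nonnegative for every entrywise nonnegative real circulant n×n matrix A — if and only if for every l = 0, …, n−1 and all nonnegative reals c_0, …, c_{n−1}, the complex number ∑_{k=0}^{n−1} ω^{−lk} · f(∑_{j=0}^{n−1} ω^{jk} c_j) has nonnegative real part (this number is automatically real since f has real coefficients). -/
/-- `f(z) := ∑_{j=0}^∞ a_j z^j` as an entire function `ℂ → ℂ`. -/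
noncomputable def fC (a : ℕ → ℝ) (z : ℂ) : ℂ := ∑' j : ℕ, (a j : ℂ) * z ^ j

section aux
variable {n : ℕ} {ω : ℂ}

lemma omega_prim (hn : 0 < n) (hω : ω = Complex.exp (2 * Real.pi * Complex.I / n)) :
    IsPrimitiveRoot ω n := hω ▸ Complex.isPrimitiveRoot_exp n hn.ne'

lemma omega_ne_zero (hω : ω = Complex.exp (2 * Real.pi * Complex.I / n)) : ω ≠ 0 :=
  hω ▸ Complex.exp_ne_zero _

lemma omega_norm (hn : 0 < n) (hω : ω = Complex.exp (2 * Real.pi * Complex.I / n)) :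
    ‖ω‖ = 1 := by
  subst hω
  rw [Complex.norm_exp]
  have : (2 * (Real.pi:ℂ) * Complex.I / n).re = 0 := by
    simp [Complex.div_re]
  rw [this, Real.exp_zero]

lemma omega_zpow_congr (hn : 0 < n) (hω : ω = Complex.exp (2 * Real.pi * Complex.I / n))
    {x y : ℤ} (h : (n:ℤ) ∣ (x - y)) : ω ^ x = ω ^ y := by
  obtain ⟨t, ht⟩ := h
  have hx : x = y + n * t := by linarith
  rw [hx, zpow_add₀ (omega_ne_zero hω), zpow_mul,
    show ((ω:ℂ) ^ ((n:ℕ):ℤ)) = ω ^ n from zpow_natCast ω n,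
    (omega_prim hn hω).pow_eq_one, one_zpow, mul_one]

lemma orth (hn : 0 < n) (hω : ω = Complex.exp (2 * Real.pi * Complex.I / n)) (m : ℤ) :
    ∑ k : Fin n, ω ^ (m * ((k:ℕ):ℤ)) = if (n:ℤ) ∣ m then (n:ℂ) else 0 := by
  split_ifs with h
  · have : ∀ k : Fin n, ω ^ (m * ((k:ℕ):ℤ)) = 1 := fun k => by
      rw [(omega_prim hn hω).zpow_eq_one_iff_dvd]
      exact Dvd.dvd.mul_right h _
    simp [this]
  · set ζ := ω ^ m with hζ
    have hζ1 : ζ ≠ 1 := fun hc => h (((omega_prim hn hω).zpow_eq_one_iff_dvd m).1 hc)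
    have hk : ∀ k : Fin n, ω ^ (m * ((k:ℕ):ℤ)) = ζ ^ (k:ℕ) := fun k => by
      rw [hζ, ← zpow_natCast (ω ^ m), ← zpow_mul]
    rw [Finset.sum_congr rfl (fun k _ => hk k), Fin.sum_univ_eq_sum_range (fun i => ζ ^ i),
      geom_sum_eq hζ1]
    have hζn : ζ ^ n = 1 := by
      rw [hζ, ← zpow_natCast, ← zpow_mul, mul_comm, zpow_mul,
        show ((ω:ℂ) ^ ((n:ℕ):ℤ)) = ω ^ n from zpow_natCast ω n,
        (omega_prim hn hω).pow_eq_one, one_zpow]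
    rw [hζn]; simp

lemma fin_sub_int (hn : 0 < n) (i j : Fin n) :
    (n:ℤ) ∣ ((((j - i : Fin n) : ℕ) : ℤ) - ((j:ℤ) - (i:ℤ))) := by
  rw [Fin.sub_def]
  simp only [Fin.val_mk]
  have hcast : (((n - (i:ℕ) + (j:ℕ)) % n : ℕ) : ℤ) = ((n:ℤ) - i + j) % n := by
    push_cast [i.isLt.le]; ring_nf
  rw [hcast]
  have hx := Int.emod_def ((n:ℤ) - i + j) n
  refine ⟨1 - (((n:ℤ) - i + j) / n), ?_⟩
  rw [hx]; ring



section main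
variable {n : ℕ} {ω : ℂ}

noncomputable def lam (ω : ℂ) {n : ℕ} (c : Fin n → ℝ) (k : Fin n) : ℂ :=
  ∑ j : Fin n, ω ^ ((j:ℕ) * (k:ℕ)) * (c j : ℂ)

lemma conv (hn : 0 < n) (hω : ω = Complex.exp (2 * Real.pi * Complex.I / n))
    (c : Fin n → ℝ) (k i j : Fin n) :
    ∑ t : Fin n, ω ^ ((((i:ℕ):ℤ) - ((t:ℕ):ℤ)) * ((k:ℕ):ℤ)) * (c (j - t) : ℂ)
      = ω ^ ((((i:ℕ):ℤ) - ((j:ℕ):ℤ)) * ((k:ℕ):ℤ)) * lam ω c k := by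
  haveI : NeZero n := ⟨hn.ne'⟩
  rw [lam, Finset.mul_sum]
  refine Fintype.sum_equiv (Equiv.subLeft j) _ _ (fun u => ?_)
  simp only [Equiv.subLeft_apply]
  have h1 : ω ^ ((((j - u : Fin n):ℕ)) * (k:ℕ)) = ω ^ ((((j - u : Fin n):ℕ):ℤ) * ((k:ℕ):ℤ)) := by
    rw [← zpow_natCast ω]; push_cast; ring_nf
  have h2 : ω ^ ((((i:ℕ):ℤ) - ((u:ℕ):ℤ)) * ((k:ℕ):ℤ))
      = ω ^ ((((i:ℕ):ℤ) - ((j:ℕ):ℤ)) * ((k:ℕ):ℤ) + (((j - u : Fin n):ℕ):ℤ) * ((k:ℕ):ℤ)) := by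
    apply omega_zpow_congr hn hω
    obtain ⟨t, ht⟩ := fin_sub_int hn u j
    exact ⟨-t * k, by push_cast at ht ⊢; linear_combination (-((k:ℕ):ℤ)) * ht⟩
  rw [h1, h2, zpow_add₀ (omega_ne_zero hω)]
  ring

lemma powEntry (hn : 0 < n) (hω : ω = Complex.exp (2 * Real.pi * Complex.I / n))
    (c : Fin n → ℝ) (m : ℕ) (i j : Fin n) :
    (n:ℂ) * ((((Matrix.of fun i j : Fin n => c (j - i)) ^ m) i j : ℝ) : ℂ)
      = ∑ k : Fin n, ω ^ ((((i:ℕ):ℤ) - ((j:ℕ):ℤ)) * ((k:ℕ):ℤ)) * (lam ω c k) ^ m := by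
  haveI : NeZero n := ⟨hn.ne'⟩
  induction m generalizing j with
  | zero =>
    simp only [pow_zero, Matrix.one_apply, mul_one]
    rw [orth hn hω]
    by_cases h : i = j
    · simp [h]
    · have hij : ¬ ((n:ℤ) ∣ ((i:ℕ):ℤ) - ((j:ℕ):ℤ)) := by
        intro hd
        have hi := i.isLt; have hj := j.isLt
        have hne : i.val ≠ j.val := fun hv => h (Fin.ext hv)
        have habs : |((i:ℕ):ℤ) - ((j:ℕ):ℤ)| < n := by rw [abs_lt]; omega
        have h0 := Int.eq_zero_of_abs_lt_dvd hd habs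
        omega
      simp [h, hij]
  | succ m ih =>
    rw [pow_succ, Matrix.mul_apply]
    push_cast
    rw [Finset.mul_sum]
    have step1 : ∀ t : Fin n, (n:ℂ) * ((((Matrix.of fun i j : Fin n => c (j - i)) ^ m) i t : ℝ) * ((Matrix.of fun i j : Fin n => c (j - i)) t j : ℝ) : ℂ)
        = ∑ k : Fin n, ω ^ ((((i:ℕ):ℤ) - ((t:ℕ):ℤ)) * ((k:ℕ):ℤ)) * (lam ω c k) ^ m * (c (j - t) : ℂ) := by
      intro t
      have := ih t
      rw [show ((Matrix.of fun i j : Fin n => c (j - i)) t j : ℝ) = c (j - t) from rfl]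
      push_cast
      rw [← mul_assoc, this, Finset.sum_mul]
    rw [Finset.sum_congr rfl (fun t _ => step1 t), Finset.sum_comm]
    refine Finset.sum_congr rfl (fun k _ => ?_)
    rw [show (∑ t : Fin n, ω ^ ((((i:ℕ):ℤ) - ((t:ℕ):ℤ)) * ((k:ℕ):ℤ)) * lam ω c k ^ m * (c (j - t):ℂ))
        = (∑ t : Fin n, ω ^ ((((i:ℕ):ℤ) - ((t:ℕ):ℤ)) * ((k:ℕ):ℤ)) * (c (j - t):ℂ)) * lam ω c k ^ m by
          rw [Finset.sum_mul]; exact Finset.sum_congr rfl (fun t _ => by ring),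
      conv hn hω c k i j, pow_succ]
    ring
end main

section analytic
variable {n : ℕ} {ω : ℂ}

lemma lam_norm_le (hn : 0 < n) (hω : ω = Complex.exp (2 * Real.pi * Complex.I / n))
    (c : Fin n → ℝ) (hc : ∀ i, 0 ≤ c i) (k : Fin n) :
    ‖lam ω c k‖ ≤ ∑ j, c j := by
  refine (norm_sum_le _ _).trans ?_
  apply Finset.sum_le_sum
  intro j _
  rw [norm_mul, norm_pow, omega_norm hn hω, one_pow, one_mul, Complex.norm_real,
    Real.norm_eq_abs, abs_of_nonneg (hc j)]

lemma entry_bound (hn : 0 < n) (hω : ω = Complex.exp (2 * Real.pi * Complex.I / n))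
    (c : Fin n → ℝ) (hc : ∀ i, 0 ≤ c i) (m : ℕ) (i j : Fin n) :
    |((Matrix.of fun i j : Fin n => c (j - i)) ^ m) i j| ≤ (∑ j, c j) ^ m := by
  have hR : 0 ≤ ∑ j, c j := Finset.sum_nonneg (fun j _ => hc j)
  have h := powEntry hn hω c m i j
  have hnorm : (n:ℝ) * |((Matrix.of fun i j : Fin n => c (j - i)) ^ m) i j|
      = ‖(n:ℂ) * ((((Matrix.of fun i j : Fin n => c (j - i)) ^ m) i j : ℝ):ℂ)‖ := by
    rw [norm_mul, Complex.norm_natCast, Complex.norm_real, Real.norm_eq_abs]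
  have hb : ‖∑ k : Fin n, ω ^ ((((i:ℕ):ℤ) - ((j:ℕ):ℤ)) * ((k:ℕ):ℤ)) * (lam ω c k) ^ m‖
      ≤ (n:ℝ) * (∑ j, c j) ^ m := by
    refine (norm_sum_le _ _).trans ?_
    rw [show (n:ℝ) * (∑ j, c j) ^ m = ∑ _k : Fin n, (∑ j, c j) ^ m by
      rw [Finset.sum_const]; simp [mul_comm]]
    apply Finset.sum_le_sum
    intro k _
    rw [norm_mul, norm_zpow, omega_norm hn hω, one_zpow, one_mul, norm_pow]
    exact pow_le_pow_left₀ (norm_nonneg _) (lam_norm_le hn hω c hc k) m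
  have := hnorm ▸ h ▸ hb
  have hn' : (0:ℝ) < n := by exact_mod_cast hn
  calc |((Matrix.of fun i j : Fin n => c (j - i)) ^ m) i j|
      = ((n:ℝ) * |((Matrix.of fun i j : Fin n => c (j - i)) ^ m) i j|) / n := by
        field_simp
    _ ≤ ((n:ℝ) * (∑ j, c j) ^ m) / n := by
        gcongr
    _ = (∑ j, c j) ^ m := by field_simp

lemma summable_entry (a : ℕ → ℝ) (ha : ∀ r : ℝ, Summable fun j : ℕ => |a j| * r ^ j)
    (hn : 0 < n) (hω : ω = Complex.exp (2 * Real.pi * Complex.I / n))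
    (c : Fin n → ℝ) (hc : ∀ i, 0 ≤ c i) (i j : Fin n) :
    Summable fun m : ℕ => a m * ((Matrix.of fun i j : Fin n => c (j - i)) ^ m) i j := by
  refine Summable.of_norm_bounded (ha (∑ j, c j)) (fun m => ?_)
  rw [Real.norm_eq_abs, abs_mul]
  exact mul_le_mul_of_nonneg_left (entry_bound hn hω c hc m i j) (abs_nonneg _)

lemma summable_matrix (a : ℕ → ℝ) (ha : ∀ r : ℝ, Summable fun j : ℕ => |a j| * r ^ j)
    (hn : 0 < n) (hω : ω = Complex.exp (2 * Real.pi * Complex.I / n))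
    (c : Fin n → ℝ) (hc : ∀ i, 0 ≤ c i) :
    Summable fun m : ℕ => a m • (Matrix.of fun i j : Fin n => c (j - i)) ^ m := by
  refine Pi.summable.2 ?_
  intro i
  refine Pi.summable.2 ?_
  intro j
  exact summable_entry a ha hn hω c hc i j

lemma fmat_entry (a : ℕ → ℝ) (ha : ∀ r : ℝ, Summable fun j : ℕ => |a j| * r ^ j)
    (hn : 0 < n) (hω : ω = Complex.exp (2 * Real.pi * Complex.I / n))
    (c : Fin n → ℝ) (hc : ∀ i, 0 ≤ c i) (i j : Fin n) :
    fmat a (Matrix.of fun i j : Fin n => c (j - i)) i j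
      = ∑' m : ℕ, a m * ((Matrix.of fun i j : Fin n => c (j - i)) ^ m) i j := by
  rw [fmat]
  erw [tsum_apply (summable_matrix a ha hn hω c hc),
    tsum_apply ((Pi.summable).1 (summable_matrix a ha hn hω c hc) i)]
  rfl

end analytic
section final
variable {n : ℕ} {ω : ℂ}

lemma summable_fc (a : ℕ → ℝ) (ha : ∀ r : ℝ, Summable fun j : ℕ => |a j| * r ^ j)
    (hn : 0 < n) (hω : ω = Complex.exp (2 * Real.pi * Complex.I / n))
    (c : Fin n → ℝ) (hc : ∀ i, 0 ≤ c i) (k : Fin n) :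
    Summable fun m : ℕ => (a m : ℂ) * (lam ω c k) ^ m := by
  refine Summable.of_norm_bounded (ha (∑ j, c j)) (fun m => ?_)
  rw [norm_mul, Complex.norm_real, Real.norm_eq_abs, norm_pow]
  exact mul_le_mul_of_nonneg_left
    (pow_le_pow_left₀ (norm_nonneg _) (lam_norm_le hn hω c hc k) m) (abs_nonneg _)

lemma entryC (a : ℕ → ℝ) (ha : ∀ r : ℝ, Summable fun j : ℕ => |a j| * r ^ j)
    (hn : 0 < n) (hω : ω = Complex.exp (2 * Real.pi * Complex.I / n))
    (c : Fin n → ℝ) (hc : ∀ i, 0 ≤ c i) (i j : Fin n) :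
    (n:ℂ) * ((fmat a (Matrix.of fun i j : Fin n => c (j - i)) i j : ℝ) : ℂ)
      = ∑ k : Fin n, ω ^ ((((i:ℕ):ℤ) - ((j:ℕ):ℤ)) * ((k:ℕ):ℤ)) * fC a (lam ω c k) := by
  rw [fmat_entry a ha hn hω c hc i j, Complex.ofReal_tsum, ← tsum_mul_left]
  have hterm : ∀ m : ℕ,
      (n:ℂ) * ((a m * ((Matrix.of fun i j : Fin n => c (j - i)) ^ m) i j : ℝ) : ℂ)
      = ∑ k : Fin n, ω ^ ((((i:ℕ):ℤ) - ((j:ℕ):ℤ)) * ((k:ℕ):ℤ))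
          * ((a m : ℂ) * (lam ω c k) ^ m) := by
    intro m
    rw [Complex.ofReal_mul, show (n:ℂ) * ((a m:ℂ) * ↑(((Matrix.of fun i j : Fin n => c (j - i)) ^ m) i j))
        = (a m:ℂ) * ((n:ℂ) * ↑(((Matrix.of fun i j : Fin n => c (j - i)) ^ m) i j)) from by ring,
      powEntry hn hω c m i j, Finset.mul_sum]
    exact Finset.sum_congr rfl (fun k _ => by ring)
  rw [tsum_congr hterm,
    Summable.tsum_finsetSum (fun k _ => Summable.mul_left _ (summable_fc a ha hn hω c hc k))]
  exact Finset.sum_congr rfl (fun k _ => by rw [tsum_mul_left]; rfl)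

/-- `f` preserves nonnegativity of circulant n×n matrices iff for every
`l = 0, …, n-1` and all nonnegative `c_0, …, c_{n-1}`, the (automatically real)
number `∑_k ω^{-lk} f(∑_j ω^{jk} c_j)` has nonnegative real part,
where `ω = e^{2πi/n}`. -/
theorem stmt_9 (a : ℕ → ℝ) (ha : ∀ r : ℝ, Summable fun j : ℕ => |a j| * r ^ j)
    (n : ℕ) (hn : 0 < n) (ω : ℂ) (hω : ω = Complex.exp (2 * Real.pi * Complex.I / n)) :
    (∀ c : Fin n → ℝ, (∀ i, 0 ≤ c i) →
      ∀ i j, 0 ≤ fmat a (Matrix.of fun i j : Fin n => c (j - i)) i j) ↔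
    (∀ l : Fin n, ∀ c : Fin n → ℝ, (∀ i, 0 ≤ c i) →
      0 ≤ (∑ k : Fin n, ω ^ (-((l : ℕ) : ℤ) * ((k : ℕ) : ℤ)) *
        fC a (∑ j : Fin n, ω ^ ((j : ℕ) * (k : ℕ)) * (c j : ℂ))).re) := by
  haveI : NeZero n := ⟨hn.ne'⟩
  have hre : ∀ x : ℝ, ((n:ℂ) * (x:ℂ)).re = n * x := fun x => by
    rw [show ((n:ℕ):ℂ) = ((n:ℝ):ℂ) from by push_cast; rfl, ← Complex.ofReal_mul,
      Complex.ofReal_re]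
  have hn' : (0:ℝ) < n := by exact_mod_cast hn
  constructor
  · intro H l c hc
    have key := entryC a ha hn hω c hc 0 l
    have hsum : (∑ k : Fin n, ω ^ (-((l:ℕ):ℤ) * ((k:ℕ):ℤ)) *
        fC a (∑ j : Fin n, ω ^ ((j:ℕ) * (k:ℕ)) * (c j : ℂ)))
        = ∑ k : Fin n, ω ^ (((((0:Fin n):ℕ):ℤ) - ((l:ℕ):ℤ)) * ((k:ℕ):ℤ)) * fC a (lam ω c k) :=
      Finset.sum_congr rfl (fun k _ => by rw [show ((((0:Fin n):ℕ):ℤ) - ((l:ℕ):ℤ)) = -((l:ℕ):ℤ) from by simp]; rfl)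
    rw [hsum, ← key, hre]
    exact mul_nonneg hn'.le (H c hc 0 l)
  · intro H c hc i j
    have hl := H (j - i) c hc
    have key := entryC a ha hn hω c hc i j
    have hexp : ∀ k : Fin n, ω ^ (-((((j - i : Fin n):ℕ):ℤ)) * ((k:ℕ):ℤ))
        = ω ^ ((((i:ℕ):ℤ) - ((j:ℕ):ℤ)) * ((k:ℕ):ℤ)) := by
      intro k
      apply omega_zpow_congr hn hω
      obtain ⟨t, ht⟩ := fin_sub_int hn i j
      exact ⟨-t * k, by linear_combination (-((k:ℕ):ℤ)) * ht⟩
    have hsum : (∑ k : Fin n, ω ^ (-((((j - i : Fin n):ℕ):ℤ)) * ((k:ℕ):ℤ)) *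
        fC a (∑ j : Fin n, ω ^ ((j:ℕ) * (k:ℕ)) * (c j : ℂ)))
        = (n:ℂ) * ((fmat a (Matrix.of fun i j : Fin n => c (j - i)) i j : ℝ) : ℂ) := by
      rw [key]
      exact Finset.sum_congr rfl (fun k _ => by rw [hexp k]; rfl)
    rw [hsum, hre] at hl
    nlinarith
end final
end aux
end

section
/- Let f : ℂ → ℂ be an entire function with only finitely many zeros. Then f maps the nonnegative reals into the nonnegative reals (i.e., for every real x ≥ 0, f(x) is real and f(x) ≥ 0) if and only if f can be written in the form f(z) = g(z) · ∏_{i}((z+α_i)² + β_i²) · ∏_{m}(z+γ_m), where the products are finite, the α_i and β_i are arbitrary reals, the γ_m are nonnegative reals, and g is an entire function with no zeros in ℂ such that g(x) is real and strictly positive for every real x ≥ 0. -/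
open Complex Filter Set Topology

local notation "conj'" => (starRingEnd ℂ)




open scoped Classical in
/-- order of vanishing as a natural number -/
noncomputable def myOrd (f : ℂ → ℂ) (b : ℂ) : ℕ :=
  if h : AnalyticAt ℂ f b then (analyticOrderAt f b).toNat else 0

lemma myOrd_eq {f : ℂ → ℂ} (hf : Differentiable ℂ f) (b : ℂ) :
    myOrd f b = (analyticOrderAt f b).toNat := by
  rw [myOrd, dif_pos (hf.analyticAt b)]

lemma conj_conj_diff {f : ℂ → ℂ} (hf : Differentiable ℂ f) :
    Differentiable ℂ fun z => conj' (f (conj' z)) := by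
  intro z
  set d := deriv f (conj' z) with hd
  have h := (hf (conj' z)).hasDerivAt
  rw [hasDerivAt_iff_tendsto] at h
  have hc : Tendsto (fun w : ℂ => conj' w) (𝓝 z) (𝓝 (conj' z)) :=
    (continuous_conj.tendsto z)
  have key : HasDerivAt (fun z => conj' (f (conj' z))) (conj' d) z := by
    rw [hasDerivAt_iff_tendsto]
    have h2 := h.comp hc
    have heq : (fun w => ‖w - z‖⁻¹ * ‖conj' (f (conj' w)) - conj' (f (conj' z)) - (w - z) • conj' d‖)
        = (fun x' => ‖x' - conj' z‖⁻¹ * ‖f x' - f (conj' z) - (x' - conj' z) • d‖) ∘ (fun w : ℂ => conj' w) := by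
      funext w
      simp only [Function.comp_apply, smul_eq_mul]
      have e1 : conj' (f (conj' w)) - conj' (f (conj' z)) - (w - z) * conj' d
          = conj' (f (conj' w) - f (conj' z) - (conj' w - conj' z) * d) := by
        simp only [map_sub, map_mul, Complex.conj_conj]
      have e2 : (w - z : ℂ) = conj' (conj' w - conj' z) := by
        simp only [map_sub, Complex.conj_conj]
      rw [e1, e2, RCLike.norm_conj, RCLike.norm_conj]
    rw [heq]
    exact h2
  exact key.differentiableAt



lemma real_symm {f : ℂ → ℂ} (hf : Differentiable ℂ f)
    (hr : ∀ x : ℝ, 0 ≤ x → (f x).im = 0) :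
    ∀ z, f (conj' z) = conj' (f z) := by
  have hF : Differentiable ℂ (fun z => conj' (f (conj' z))) := conj_conj_diff hf
  set u : ℕ → ℂ := fun n => ((((n : ℝ) + 1)⁻¹ : ℝ) : ℂ) with hu
  have hseq : Tendsto u atTop (𝓝[≠] (0 : ℂ)) := by
    apply tendsto_nhdsWithin_of_tendsto_nhds_of_eventually_within
    · have h1 : Tendsto (fun n : ℕ => ((n : ℝ) + 1)⁻¹) atTop (𝓝 (0:ℝ)) := by
        simpa using tendsto_one_div_add_atTop_nhds_zero_nat (𝕜 := ℝ)
      have h2 := (Complex.continuous_ofReal.tendsto 0).comp h1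
      exact h2
    · filter_upwards with n
      simp only [mem_compl_iff, mem_singleton_iff, hu]
      intro h
      have h0 : ((n : ℝ) + 1)⁻¹ = (0:ℝ) := by exact_mod_cast h
      have hp : (0:ℝ) < ((n : ℝ) + 1)⁻¹ := by positivity
      rw [h0] at hp; exact lt_irrefl _ hp
  have hfreq : ∃ᶠ z in 𝓝[≠] (0:ℂ), f z = conj' (f (conj' z)) := by
    apply hseq.frequently
    apply Filter.Frequently.of_forall
    intro n
    show f (u n) = conj' (f (conj' (u n)))
    rw [hu]
    have hx : (0:ℝ) ≤ ((n : ℝ) + 1)⁻¹ := by positivity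
    have him := hr _ hx
    have hreal : conj' ((((n : ℝ) + 1)⁻¹ : ℝ) : ℂ) = ((((n : ℝ) + 1)⁻¹ : ℝ) : ℂ) :=
      Complex.conj_ofReal _
    rw [hreal, Complex.conj_eq_iff_im.mpr him]
  have := AnalyticOnNhd.eq_of_frequently_eq (fun z _ => hf.analyticAt z)
    (fun z _ => hF.analyticAt z) hfreq
  intro z
  have := congrFun this (conj' z)
  rw [this, Complex.conj_conj]

lemma dslope_entire {f : ℂ → ℂ} (hf : Differentiable ℂ f) (a : ℂ) :
    Differentiable ℂ (dslope f a) := by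
  rw [← differentiableOn_univ]
  exact (Complex.differentiableOn_dslope (univ_mem)).mpr hf.differentiableOn

lemma dslope_factor {f : ℂ → ℂ} {a : ℂ} (ha : f a = 0) (z : ℂ) :
    f z = (z - a) * dslope f a z := by
  have h := sub_smul_dslope f a z
  rw [ha, sub_zero] at h
  rw [← h, smul_eq_mul]

lemma closure_transfer {g : ℂ → ℂ} (hg : Continuous g) {s : Set ℝ} {C : Set ℂ}
    (hC : IsClosed C) (h : ∀ x ∈ s, g x ∈ C) {x : ℝ} (hx : x ∈ closure s) : g x ∈ C := by
  have hm : MapsTo (fun x : ℝ => g x) s C := h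
  have := hm.closure (hg.comp Complex.continuous_ofReal)
  have := this hx
  rwa [hC.closure_eq] at this

lemma isClosed_posC : IsClosed {z : ℂ | z.im = 0 ∧ 0 ≤ z.re} :=
  (isClosed_eq Complex.continuous_im continuous_const).inter
    (isClosed_le continuous_const Complex.continuous_re)

lemma isClosed_negC : IsClosed {z : ℂ | z.im = 0 ∧ z.re ≤ 0} :=
  (isClosed_eq Complex.continuous_im continuous_const).inter
    (isClosed_le Complex.continuous_re continuous_const)

lemma div_real {w v : ℂ} {c : ℝ} (hc : c ≠ 0) (h : w = (c:ℂ) * v) :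
    v.im = c⁻¹ * w.im ∧ v.re = c⁻¹ * w.re := by
  have hv : v = ((c⁻¹ : ℝ) : ℂ) * w := by
    rw [h, ← mul_assoc, ← Complex.ofReal_mul, inv_mul_cancel₀ hc, Complex.ofReal_one, one_mul]
  rw [hv]
  constructor <;> simp [Complex.mul_im, Complex.mul_re]


lemma order_ne_top {f : ℂ → ℂ} (hf : Differentiable ℂ f)
    (hz : Set.Finite {z | f z = 0}) (b : ℂ) : analyticOrderAt f b ≠ ⊤ := by
  intro htop
  have h : ∀ᶠ z in 𝓝 b, f z = 0 := analyticOrderAt_eq_top.mp htop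
  have h0 : EqOn f 0 univ :=
    AnalyticOnNhd.eqOn_zero_of_preconnected_of_eventuallyEq_zero
      (fun z _ => hf.analyticAt z) isPreconnected_univ (mem_univ b) h
  have : {z : ℂ | f z = 0} = univ := eq_univ_of_forall fun z => h0 (mem_univ z)
  rw [this] at hz
  exact Set.infinite_univ hz

lemma myOrd_pos {f : ℂ → ℂ} (hf : Differentiable ℂ f)
    (hz : Set.Finite {z | f z = 0}) {b : ℂ} (hb : f b = 0) : 1 ≤ myOrd f b := by
  by_contra h
  push_neg at h
  have h0 : myOrd f b = 0 := by omega
  rw [myOrd_eq hf] at h0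
  have hne := order_ne_top hf hz b
  have : analyticOrderAt f b = ((0 : ℕ) : ℕ∞) := by
    rw [← h0, ENat.coe_toNat hne]
  obtain ⟨g, hga, hgb, hev⟩ := ((hf.analyticAt b).analyticOrderAt_eq_natCast).mp this
  have := hev.self_of_nhds
  simp only [pow_zero, one_smul] at this
  rw [hb] at this
  exact hgb this.symm

lemma myOrd_zero {f : ℂ → ℂ} (hf : Differentiable ℂ f) {b : ℂ} (hb : f b ≠ 0) :
    myOrd f b = 0 := by
  rw [myOrd_eq hf]
  have : analyticOrderAt f b = (0 : ℕ) := by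
    rw [(hf.analyticAt b).analyticOrderAt_eq_natCast]
    exact ⟨f, hf.analyticAt b, hb, by filter_upwards with z; simp⟩
  rw [this]; rfl

lemma myOrd_factor {f g : ℂ → ℂ} (hf : Differentiable ℂ f) (hg : Differentiable ℂ g)
    (hgz : Set.Finite {z | g z = 0}) (a b : ℂ) (j : ℕ)
    (hfg : ∀ z, f z = (z - a) ^ j * g z) :
    myOrd f b = myOrd g b + (if b = a then j else 0) := by
  have hne := order_ne_top hg hgz b
  set n := myOrd g b with hn
  have hordg : analyticOrderAt g b = (n : ℕ∞) := by
    rw [hn, myOrd_eq hg]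
    exact (ENat.coe_toNat hne).symm
  obtain ⟨h, hh, hhb, hev⟩ := ((hg.analyticAt b).analyticOrderAt_eq_natCast).mp hordg
  by_cases hba : b = a
  · subst hba
    have : analyticOrderAt f b = ((n + j : ℕ) : ℕ∞) := by
      rw [(hf.analyticAt b).analyticOrderAt_eq_natCast]
      refine ⟨h, hh, hhb, ?_⟩
      filter_upwards [hev] with z hz
      rw [hfg z, hz]
      simp only [smul_eq_mul]
      ring
    rw [myOrd_eq hf, this, if_pos rfl, ENat.toNat_coe]
  · have hfac : AnalyticAt ℂ (fun z => (z - a) ^ j * h z) b :=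
      ((analyticAt_id.sub analyticAt_const).pow j).mul hh
    have : analyticOrderAt f b = (n : ℕ∞) := by
      rw [(hf.analyticAt b).analyticOrderAt_eq_natCast]
      refine ⟨fun z => (z - a) ^ j * h z, hfac, ?_, ?_⟩
      · exact mul_ne_zero (pow_ne_zero _ (sub_ne_zero.mpr hba)) hhb
      · filter_upwards [hev] with z hz
        rw [hfg z, hz]
        simp only [smul_eq_mul]
        ring
    rw [myOrd_eq hf, this, if_neg hba, ENat.toNat_coe, add_zero]

lemma mu_lt {f g : ℂ → ℂ} (hf : Differentiable ℂ f) (hg : Differentiable ℂ g)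
    (hfz : Set.Finite {z : ℂ | f z = 0}) (hgz : Set.Finite {z : ℂ | g z = 0})
    {a : ℂ} (ha : f a = 0) {j : ℕ} (hj : 1 ≤ j)
    (hfg : ∀ z, f z = (z - a) ^ j * g z) :
    ∑ b ∈ hgz.toFinset, myOrd g b < ∑ b ∈ hfz.toFinset, myOrd f b := by
  have hsub : hgz.toFinset ⊆ hfz.toFinset := by
    intro z hz
    rw [Set.Finite.mem_toFinset] at hz ⊢
    show f z = 0
    rw [hfg z, hz, mul_zero]
  have hstep : ∀ b, myOrd f b = myOrd g b + (if b = a then j else 0) :=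
    fun b => myOrd_factor hf hg hgz a b j hfg
  have hext : ∑ b ∈ hgz.toFinset, myOrd g b = ∑ b ∈ hfz.toFinset, myOrd g b := by
    apply Finset.sum_subset hsub
    intro b _ hb
    rw [Set.Finite.mem_toFinset] at hb
    exact myOrd_zero hg hb
  rw [hext]
  apply Finset.sum_lt_sum
  · intro b _; rw [hstep b]; exact Nat.le_add_right _ _
  · refine ⟨a, ?_, ?_⟩
    · rw [Set.Finite.mem_toFinset]; exact ha
    · rw [hstep a, if_pos rfl]; omega



def Pkg (f : ℂ → ℂ) : Prop :=
  ∃ (k m : ℕ) (α β : Fin k → ℝ) (γ : Fin m → ℝ) (g : ℂ → ℂ),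
      Differentiable ℂ g ∧ (∀ z : ℂ, g z ≠ 0) ∧
      (∀ x : ℝ, 0 ≤ x → (g x).im = 0 ∧ 0 < (g x).re) ∧
      (∀ i, 0 ≤ γ i) ∧
      (∀ z : ℂ, f z =
        g z * (∏ i : Fin k, ((z + (α i : ℂ)) ^ 2 + ((β i : ℂ)) ^ 2)) *
          ∏ i : Fin m, (z + (γ i : ℂ)))

lemma quad_id (a z : ℂ) :
    (z - a) * (z - conj' a) = (z + ((-a.re : ℝ) : ℂ)) ^ 2 + ((a.im : ℝ) : ℂ) ^ 2 := by
  have h1 : (a : ℂ) = (a.re : ℂ) + (a.im : ℂ) * I := (re_add_im a).symm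
  have h2 : conj' a = (a.re : ℂ) - (a.im : ℂ) * I := by
    apply Complex.ext <;> simp
  rw [h2]
  nth_rewrite 1 [h1]
  push_cast
  linear_combination (-(a.im : ℂ) ^ 2) * Complex.I_sq

lemma pkg_quad {f g2 : ℂ → ℂ} (p q : ℝ)
    (hfac : ∀ z, f z = ((z + (p:ℂ)) ^ 2 + ((q:ℂ)) ^ 2) * g2 z) (h : Pkg g2) : Pkg f := by
  obtain ⟨k, m, α, β, γ, g, hg, hgne, hgpos, hγ, hprod⟩ := h
  refine ⟨k + 1, m, Fin.cons p α, Fin.cons q β, γ, g, hg, hgne, hgpos, hγ, fun z => ?_⟩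
  rw [hfac z, hprod z, Fin.prod_univ_succ]
  simp only [Fin.cons_zero, Fin.cons_succ]
  ring

lemma pkg_lin {f g1 : ℂ → ℂ} (c : ℝ) (hc : 0 ≤ c)
    (hfac : ∀ z, f z = (z + (c:ℂ)) * g1 z) (h : Pkg g1) : Pkg f := by
  obtain ⟨k, m, α, β, γ, g, hg, hgne, hgpos, hγ, hprod⟩ := h
  refine ⟨k, m + 1, α, β, Fin.cons c γ, g, hg, hgne, hgpos, ?_, fun z => ?_⟩
  · intro i
    refine Fin.cases ?_ ?_ i
    · simpa using hc
    · intro j; simpa using hγ j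
  · rw [hfac z, hprod z, Fin.prod_univ_succ]
    simp only [Fin.cons_zero, Fin.cons_succ]
    ring

lemma pkg_nozero {f : ℂ → ℂ} (hf : Differentiable ℂ f)
    (hempty : ∀ z : ℂ, f z ≠ 0)
    (hpos : ∀ x : ℝ, 0 ≤ x → (f x).im = 0 ∧ 0 ≤ (f x).re) : Pkg f := by
  refine ⟨0, 0, Fin.elim0, Fin.elim0, Fin.elim0, f, hf, hempty, fun x hx => ?_,
    fun i => i.elim0, fun z => by simp⟩
  obtain ⟨him, hre⟩ := hpos x hx
  refine ⟨him, lt_of_le_of_ne hre fun h0 => ?_⟩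
  exact hempty x (Complex.ext h0.symm him)


lemma main_ind (N : ℕ) : ∀ f : ℂ → ℂ, ∀ hf : Differentiable ℂ f,
    ∀ hz : Set.Finite {z : ℂ | f z = 0},
    (∑ b ∈ hz.toFinset, myOrd f b) ≤ N →
    (∀ x : ℝ, 0 ≤ x → (f x).im = 0 ∧ 0 ≤ (f x).re) → Pkg f := by
  induction N with
  | zero =>
    intro f hf hz hsum hpos
    refine pkg_nozero hf (fun z hz0 => ?_) hpos
    have h1 : 1 ≤ myOrd f z := myOrd_pos hf hz hz0
    have hzmem : z ∈ hz.toFinset := by rw [Set.Finite.mem_toFinset]; exact hz0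
    have h2 : myOrd f z ≤ ∑ b ∈ hz.toFinset, myOrd f b :=
      Finset.single_le_sum (fun b _ => Nat.zero_le _) hzmem
    omega
  | succ N ih =>
    intro f hf hz hsum hpos
    rcases Set.eq_empty_or_nonempty {z : ℂ | f z = 0} with hem | ⟨a, ha⟩
    · refine pkg_nozero hf (fun z hz0 => ?_) hpos
      rw [Set.eq_empty_iff_forall_notMem] at hem
      exact hem z hz0
    · have ha : f a = 0 := ha
      set g1 := dslope f a with hg1def
      have hg1 : Differentiable ℂ g1 := dslope_entire hf a
      have hfac1 : ∀ z, f z = (z - a) * g1 z := fun z => dslope_factor ha z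
      have hg1z : Set.Finite {z : ℂ | g1 z = 0} := by
        apply Set.Finite.subset (hz.union (Set.finite_singleton a))
        intro z hz0
        rcases eq_or_ne z a with hza | hza
        · exact Or.inr hza
        · refine Or.inl ?_
          show f z = 0
          rw [hfac1 z, hz0, mul_zero]
      have hmu1 : ∑ b ∈ hg1z.toFinset, myOrd g1 b < ∑ b ∈ hz.toFinset, myOrd f b :=
        mu_lt hf hg1 hz hg1z ha le_rfl (fun z => by rw [pow_one]; exact hfac1 z)
      by_cases him : a.im = 0
      · -- a is real
        have hareal : a = ((a.re : ℝ) : ℂ) := by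
          apply Complex.ext <;> simp [him]
        by_cases hre : a.re ≤ 0
        · -- Case B : real nonpositive zero
          have hg1pos : ∀ x : ℝ, 0 ≤ x → (g1 x).im = 0 ∧ 0 ≤ (g1 x).re := by
            have hIoi : ∀ x ∈ Ioi (0:ℝ), g1 x ∈ {z : ℂ | z.im = 0 ∧ 0 ≤ z.re} := by
              intro x hx
              rw [mem_Ioi] at hx
              have hc : (0:ℝ) < x - a.re := by linarith
              have hfx : f x = ((x - a.re : ℝ) : ℂ) * g1 x := by
                rw [hfac1 x]
                push_cast
                rw [← hareal]
              obtain ⟨h1, h2⟩ := div_real hc.ne' hfx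
              obtain ⟨him0, hre0⟩ := hpos x hx.le
              exact ⟨by rw [h1, him0, mul_zero],
                by rw [h2]; exact mul_nonneg (inv_nonneg.mpr hc.le) hre0⟩
            intro x hx
            have hxcl : x ∈ closure (Ioi (0:ℝ)) := by rw [closure_Ioi]; exact hx
            exact closure_transfer hg1.continuous isClosed_posC hIoi hxcl
          have hfacB : ∀ z, f z = (z + ((-a.re : ℝ):ℂ)) * g1 z := by
            intro z
            rw [hfac1 z]
            push_cast
            rw [← hareal]
            ring
          exact pkg_lin (-a.re) (by linarith) hfacB
            (ih g1 hg1 hg1z (by omega) hg1pos)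
        · -- Case C : real positive zero
          push_neg at hre
          have hposC1 : ∀ x ∈ Ioi a.re, g1 x ∈ {z : ℂ | z.im = 0 ∧ 0 ≤ z.re} := by
            intro x hx
            rw [mem_Ioi] at hx
            have hc : (0:ℝ) < x - a.re := by linarith
            have hfx : f x = ((x - a.re : ℝ) : ℂ) * g1 x := by
              rw [hfac1 x]; push_cast; rw [← hareal]
            obtain ⟨h1, h2⟩ := div_real hc.ne' hfx
            obtain ⟨him0, hre0⟩ := hpos x (by linarith)
            exact ⟨by rw [h1, him0, mul_zero],
              by rw [h2]; exact mul_nonneg (inv_nonneg.mpr hc.le) hre0⟩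
          have hnegC : ∀ x ∈ Ioo (0:ℝ) a.re, g1 x ∈ {z : ℂ | z.im = 0 ∧ z.re ≤ 0} := by
            intro x hx
            rw [mem_Ioo] at hx
            have hc : x - a.re ≠ 0 := by linarith [hx.2]
            have hfx : f x = ((x - a.re : ℝ) : ℂ) * g1 x := by
              rw [hfac1 x]; push_cast; rw [← hareal]
            obtain ⟨h1, h2⟩ := div_real hc hfx
            obtain ⟨him0, hre0⟩ := hpos x hx.1.le
            refine ⟨by rw [h1, him0, mul_zero], ?_⟩
            rw [h2]
            have : (x - a.re)⁻¹ ≤ 0 := inv_nonpos.mpr (by linarith [hx.2])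
            exact mul_nonpos_of_nonpos_of_nonneg this hre0
          have h1mem : g1 ((a.re : ℝ) : ℂ) ∈ {z : ℂ | z.im = 0 ∧ 0 ≤ z.re} :=
            closure_transfer hg1.continuous isClosed_posC hposC1
              (by rw [closure_Ioi]; exact self_mem_Ici)
          have h2mem : g1 ((a.re : ℝ) : ℂ) ∈ {z : ℂ | z.im = 0 ∧ z.re ≤ 0} :=
            closure_transfer hg1.continuous isClosed_negC hnegC
              (by rw [closure_Ioo (ne_of_lt hre)]; exact ⟨hre.le, le_refl _⟩)
          have hg1a : g1 a = 0 := by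
            rw [hareal]
            apply Complex.ext
            · simpa using le_antisymm h2mem.2 h1mem.2
            · simpa using h1mem.1
          set g2 := dslope g1 a with hg2def
          have hg2 : Differentiable ℂ g2 := dslope_entire hg1 a
          have hfac2 : ∀ z, g1 z = (z - a) * g2 z := fun z => dslope_factor hg1a z
          have hg2z : Set.Finite {z : ℂ | g2 z = 0} := by
            apply Set.Finite.subset (hg1z.union (Set.finite_singleton a))
            intro z hz0
            rcases eq_or_ne z a with hza | hza
            · exact Or.inr hza
            · refine Or.inl ?_
              show g1 z = 0
              rw [hfac2 z, hz0, mul_zero]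
          have hmu2 : ∑ b ∈ hg2z.toFinset, myOrd g2 b < ∑ b ∈ hg1z.toFinset, myOrd g1 b :=
            mu_lt hg1 hg2 hg1z hg2z hg1a le_rfl (fun z => by rw [pow_one]; exact hfac2 z)
          have hg2pos : ∀ x : ℝ, 0 ≤ x → (g2 x).im = 0 ∧ 0 ≤ (g2 x).re := by
            have hne : ∀ x : ℝ, 0 ≤ x → x ≠ a.re → g2 x ∈ {z : ℂ | z.im = 0 ∧ 0 ≤ z.re} := by
              intro x hx hxne
              have hc : (0:ℝ) < (x - a.re) ^ 2 :=
                lt_of_le_of_ne (sq_nonneg _) (Ne.symm (pow_ne_zero 2 (sub_ne_zero.mpr hxne)))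
              have hfx : f x = (((x - a.re) ^ 2 : ℝ) : ℂ) * g2 x := by
                rw [hfac1 x, hfac2 x]
                push_cast
                rw [← hareal]
                ring
              obtain ⟨h1, h2⟩ := div_real hc.ne' hfx
              obtain ⟨him0, hre0⟩ := hpos x hx
              exact ⟨by rw [h1, him0, mul_zero],
                by rw [h2]; exact mul_nonneg (inv_nonneg.mpr hc.le) hre0⟩
            intro x hx
            rcases eq_or_ne x a.re with hxa | hxa
            · have hsub : ∀ y ∈ Ioi a.re, g2 y ∈ {z : ℂ | z.im = 0 ∧ 0 ≤ z.re} := by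
                intro y hy
                rw [mem_Ioi] at hy
                exact hne y (by linarith) (ne_of_gt hy)
              exact closure_transfer hg2.continuous isClosed_posC hsub
                (by rw [closure_Ioi, hxa]; exact self_mem_Ici)
            · exact hne x hx hxa
          have hfacC : ∀ z, f z = ((z + ((-a.re : ℝ):ℂ)) ^ 2 + (((0:ℝ)):ℂ) ^ 2) * g2 z := by
            intro z
            rw [hfac1 z, hfac2 z]
            push_cast
            rw [← hareal]
            ring
          exact pkg_quad (-a.re) 0 hfacC
            (ih g2 hg2 hg2z (by omega) hg2pos)
      · -- Case A : nonreal zero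
        have hsym : ∀ z, f (conj' z) = conj' (f z) :=
          real_symm hf (fun x hx => (hpos x hx).1)
        set a' := conj' a with ha'def
        have ha' : f a' = 0 := by rw [ha'def, hsym a, ha, map_zero]
        have ha'ne : a' ≠ a := by
          rw [ha'def]
          intro h
          exact him (Complex.conj_eq_iff_im.mp h)
        have hg1a' : g1 a' = 0 := by
          rw [hg1def, dslope_of_ne f ha'ne, slope_def_field, ha, ha']
          simp
        set g2 := dslope g1 a' with hg2def
        have hg2 : Differentiable ℂ g2 := dslope_entire hg1 a'
        have hfac2 : ∀ z, g1 z = (z - a') * g2 z := fun z => dslope_factor hg1a' z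
        have hg2z : Set.Finite {z : ℂ | g2 z = 0} := by
          apply Set.Finite.subset (hg1z.union (Set.finite_singleton a'))
          intro z hz0
          rcases eq_or_ne z a' with hza | hza
          · exact Or.inr hza
          · refine Or.inl ?_
            show g1 z = 0
            rw [hfac2 z, hz0, mul_zero]
        have hmu2 : ∑ b ∈ hg2z.toFinset, myOrd g2 b < ∑ b ∈ hg1z.toFinset, myOrd g1 b :=
          mu_lt hg1 hg2 hg1z hg2z hg1a' le_rfl (fun z => by rw [pow_one]; exact hfac2 z)
        have hquad : ∀ z, f z = ((z + ((-a.re : ℝ):ℂ)) ^ 2 + ((a.im : ℝ):ℂ) ^ 2) * g2 z := by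
          intro z
          rw [hfac1 z, hfac2 z, ← mul_assoc, ha'def, quad_id a z]
        have hg2pos : ∀ x : ℝ, 0 ≤ x → (g2 x).im = 0 ∧ 0 ≤ (g2 x).re := by
          intro x hx
          have hc : (0:ℝ) < (x + -a.re) ^ 2 + a.im ^ 2 := by
            have h2 : (0:ℝ) < a.im ^ 2 :=
              lt_of_le_of_ne (sq_nonneg _) (Ne.symm (pow_ne_zero 2 him))
            have := sq_nonneg (x + -a.re)
            linarith
          have hfx : f x = ((((x + -a.re) ^ 2 + a.im ^ 2 : ℝ)) : ℂ) * g2 x := by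
            rw [hquad x]
            congr 1
            push_cast
            ring
          obtain ⟨h1, h2⟩ := div_real hc.ne' hfx
          obtain ⟨him0, hre0⟩ := hpos x hx
          exact ⟨by rw [h1, him0, mul_zero],
            by rw [h2]; exact mul_nonneg (inv_nonneg.mpr hc.le) hre0⟩
        exact pkg_quad (-a.re) a.im hquad
          (ih g2 hg2 hg2z (by omega) hg2pos)



lemma pkg_rev (f : ℂ → ℂ)
    (k m : ℕ) (α β : Fin k → ℝ) (γ : Fin m → ℝ) (g : ℂ → ℂ)
    (hgpos : ∀ x : ℝ, 0 ≤ x → (g x).im = 0 ∧ 0 < (g x).re)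
    (hγ : ∀ i, 0 ≤ γ i)
    (hprod : ∀ z : ℂ, f z =
        g z * (∏ i : Fin k, ((z + (α i : ℂ)) ^ 2 + ((β i : ℂ)) ^ 2)) *
          ∏ i : Fin m, (z + (γ i : ℂ))) :
    ∀ x : ℝ, 0 ≤ x → (f x).im = 0 ∧ 0 ≤ (f x).re := by
  intro x hx
  obtain ⟨him, hre⟩ := hgpos x hx
  have hgx : g x = (((g x).re : ℝ) : ℂ) := by
    apply Complex.ext
    · simp
    · simp [him]
  have e1 : ((∏ i : Fin k, ((x + α i) ^ 2 + (β i) ^ 2) : ℝ) : ℂ)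
      = ∏ i : Fin k, (((x:ℂ) + (α i : ℂ)) ^ 2 + ((β i : ℂ)) ^ 2) := by
    push_cast
    rfl
  have e2 : ((∏ i : Fin m, (x + γ i) : ℝ) : ℂ) = ∏ i : Fin m, ((x:ℂ) + (γ i : ℂ)) := by
    push_cast
    rfl
  have key : f x = ((((g x).re * (∏ i : Fin k, ((x + α i) ^ 2 + (β i) ^ 2))
      * ∏ i : Fin m, (x + γ i) : ℝ)) : ℂ) := by
    rw [hprod x, hgx, ← e1, ← e2]
    norm_cast
  rw [key]
  constructor
  · simp only [Complex.ofReal_im]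
  · simp only [Complex.ofReal_re]
    apply mul_nonneg
    apply mul_nonneg hre.le
    · exact Finset.prod_nonneg fun i _ => add_nonneg (sq_nonneg _) (sq_nonneg _)
    · exact Finset.prod_nonneg fun i _ => add_nonneg hx (hγ i)

/-- An entire function `f` with finitely many zeros maps `ℝ₊` into `ℝ₊` iff it
has the form `f(z) = g(z) ∏_i ((z+α_i)² + β_i²) ∏_m (z+γ_m)` with `α_i, β_i`
real, `γ_m ≥ 0`, and `g` entire, zero-free, and real and strictly positive
on `ℝ₊`. -/
theorem stmt_10 (f : ℂ → ℂ) (hf : Differentiable ℂ f)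
    (hzeros : Set.Finite {z : ℂ | f z = 0}) :
    (∀ x : ℝ, 0 ≤ x → (f x).im = 0 ∧ 0 ≤ (f x).re) ↔
    (∃ (k m : ℕ) (α β : Fin k → ℝ) (γ : Fin m → ℝ) (g : ℂ → ℂ),
      Differentiable ℂ g ∧ (∀ z : ℂ, g z ≠ 0) ∧
      (∀ x : ℝ, 0 ≤ x → (g x).im = 0 ∧ 0 < (g x).re) ∧
      (∀ i, 0 ≤ γ i) ∧
      (∀ z : ℂ, f z =
        g z * (∏ i : Fin k, ((z + (α i : ℂ)) ^ 2 + ((β i : ℂ)) ^ 2)) *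
          ∏ i : Fin m, (z + (γ i : ℂ)))) := by
  constructor
  · intro hpos
    exact main_ind (∑ b ∈ hzeros.toFinset, myOrd f b) f hf hzeros le_rfl hpos
  · rintro ⟨k, m, α, β, γ, g, hg, hgne, hgpos, hγ, hprod⟩
    exact pkg_rev f k m α β γ g hgpos hγ hprod
end

section
/- An entire function f with real coefficients belongs to F_2 (i.e., preserves nonnegativity of 2×2 matrices) if and only if it satisfies the two conditions: (1) f(x+y) − f(x−y) ≥ 0 for all x, y ≥ 0; and (2) (x+y−z)·f(x−y) + (z−x+y)·f(x+y) ≥ 0 for all x ≥ z ≥ 0 and y ≥ x−z. Moreover, this is also equivalent to the pair of conditions (1) together with (2'): (x+y)·f(x−y) + (y−x)·f(x+y) ≥ 0 for all y ≥ x ≥ 0. -/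
/-- `f(x) := ∑_{j=0}^∞ a_j x^j` as a real function. -/
noncomputable def fR (a : ℕ → ℝ) (x : ℝ) : ℝ := ∑' j : ℕ, a j * x ^ j

section Aux

variable {a : ℕ → ℝ}

lemma HasSum.of_eq {f g : ℕ → ℝ} {s : ℝ} (H : HasSum f s) (h : ∀ n, g n = f n) :
    HasSum g s := by
  have : g = f := funext h
  rw [this]; exact H

lemma summable_pow (ha : ∀ r : ℝ, Summable fun j : ℕ => |a j| * r ^ j) (c : ℝ) :
    Summable fun n : ℕ => a n * c ^ n := by
  refine Summable.of_abs ?_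
  have := ha |c|
  refine this.congr fun n => ?_
  rw [abs_mul, abs_pow]

lemma hasSum_fR (ha : ∀ r : ℝ, Summable fun j : ℕ => |a j| * r ^ j) (c : ℝ) :
    HasSum (fun n : ℕ => a n * c ^ n) (fR a c) :=
  (summable_pow ha c).hasSum

lemma fR_zero : fR a 0 = a 0 := by
  rw [fR, tsum_eq_single 0]
  · simp
  · intro n hn; simp [zero_pow hn]

lemma hasSum_matrix {g : ℕ → Matrix (Fin 2) (Fin 2) ℝ} {M : Matrix (Fin 2) (Fin 2) ℝ}
    (h : ∀ i j, HasSum (fun n => g n i j) (M i j)) : HasSum g M :=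
  Pi.hasSum.2 fun i => Pi.hasSum.2 fun j => h i j

lemma fmat_eq {A M : Matrix (Fin 2) (Fin 2) ℝ}
    (h : ∀ i j, HasSum (fun n => a n * (A ^ n) i j) (M i j)) : fmat a A = M := by
  have : HasSum (fun n => a n • A ^ n) M := by
    refine hasSum_matrix fun i j => ?_
    refine (h i j).of_eq fun n => ?_
    simp [Matrix.smul_apply]
  exact this.tsum_eq

/-- binomial coefficient bound -/
lemma choose_mul_pow_le {x : ℝ} (hx : 0 ≤ x) (m j : ℕ) :
    (m.choose j : ℝ) * x ^ (m - j) ≤ (x + 1) ^ m := by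
  rcases le_or_gt j m with h | h
  · rw [add_pow]
    have hmem : m - j ∈ Finset.range (m + 1) := Finset.mem_range.2 (by omega)
    have : (m.choose j : ℝ) * x ^ (m - j)
        = x ^ (m - j) * 1 ^ (m - (m - j)) * (m.choose (m - j) : ℝ) := by
      rw [Nat.choose_symm h]; ring
    rw [this]
    refine Finset.single_le_sum (f := fun k => x ^ k * 1 ^ (m - k) * (m.choose k : ℝ))
      (fun k _ => by positivity) hmem
  · simp [Nat.choose_eq_zero_of_lt h]
    positivity

/-- row lemma: binomial expansion as a HasSum over ℕ -/
lemma hasSum_binomial (x h : ℝ) (m : ℕ) :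
    HasSum (fun j : ℕ => (m.choose j : ℝ) * x ^ (m - j) * h ^ j) ((x + h) ^ m) := by
  have hz : ∀ j ∉ Finset.range (m + 1), (m.choose j : ℝ) * x ^ (m - j) * h ^ j = 0 := by
    intro j hj
    rw [Finset.mem_range, not_lt] at hj
    rw [Nat.choose_eq_zero_of_lt (by omega), Nat.cast_zero, zero_mul, zero_mul]
  have := hasSum_sum_of_ne_finset_zero (L := SummationFilter.unconditional ℕ) hz
  convert this using 1
  rw [add_comm x h, add_pow]
  refine Finset.sum_congr rfl fun k hk => by ring

lemma summable_S (ha : ∀ r : ℝ, Summable fun j : ℕ => |a j| * r ^ j) {x : ℝ} (hx : 0 ≤ x) :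
    Summable fun n : ℕ => a n * ((n : ℝ) * x ^ (n - 1)) := by
  refine Summable.of_abs ?_
  refine (ha (x + 1)).of_nonneg_of_le (fun n => abs_nonneg _) fun n => ?_
  rw [abs_mul]
  have h1 : |(n : ℝ) * x ^ (n - 1)| = (n : ℝ) * x ^ (n - 1) := by
    rw [abs_of_nonneg]; positivity
  rw [h1]
  refine mul_le_mul_of_nonneg_left ?_ (abs_nonneg _)
  have := choose_mul_pow_le hx n 1
  rwa [Nat.choose_one_right] at this

end Aux

section Key


lemma key_lemma {b : ℕ → ℝ} (hb : Summable fun j => |b j|)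
    (hpos : ∀ h : ℝ, 0 < h → h ≤ 1 → 0 ≤ ∑' j, b j * h ^ j) : 0 ≤ b 0 := by
  obtain ⟨C, hC⟩ : ∃ C, C = ∑' j, |b (j + 1)| := ⟨_, rfl⟩
  have hbs : Summable fun j => |b (j + 1)| := (summable_nat_add_iff (f := fun j => |b j|) 1).2 hb
  have hCnn : 0 ≤ C := hC ▸ tsum_nonneg fun _ => abs_nonneg _
  have main : ∀ h : ℝ, 0 < h → h ≤ 1 → -(h * C) ≤ b 0 := by
    intro h h0 h1
    have habs : ∀ j : ℕ, |b j * h ^ j| ≤ |b j| := by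
      intro j
      rw [abs_mul, abs_pow, abs_of_pos h0]
      exact mul_le_of_le_one_right (abs_nonneg _) (pow_le_one₀ h0.le h1)
    have hsum : Summable fun j => b j * h ^ j :=
      Summable.of_abs (hb.of_nonneg_of_le (fun _ => abs_nonneg _) habs)
    have h2 : ∑' j, b j * h ^ j = b 0 + ∑' j, b (j + 1) * h ^ (j + 1) := by
      rw [Summable.tsum_eq_zero_add hsum]; simp
    have hsum' : Summable fun j => b (j + 1) * h ^ (j + 1) :=
      (summable_nat_add_iff (f := fun j => b j * h ^ j) 1).2 hsum
    have hptwise : ∀ j : ℕ, b (j + 1) * h ^ (j + 1) ≤ |b (j + 1)| * h := by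
      intro j
      calc b (j + 1) * h ^ (j + 1) ≤ |b (j + 1) * h ^ (j + 1)| := le_abs_self _
        _ = |b (j + 1)| * h ^ (j + 1) := by rw [abs_mul, abs_pow, abs_of_pos h0]
        _ ≤ |b (j + 1)| * h := by
            refine mul_le_mul_of_nonneg_left ?_ (abs_nonneg _)
            calc h ^ (j + 1) ≤ h ^ 1 := pow_le_pow_of_le_one h0.le h1 (by omega)
              _ = h := pow_one h
    have h3 : ∑' j, b (j + 1) * h ^ (j + 1) ≤ h * C := by
      calc ∑' j, b (j + 1) * h ^ (j + 1) ≤ ∑' j, |b (j + 1)| * h :=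
            Summable.tsum_le_tsum hptwise hsum' (hbs.mul_right h)
        _ = C * h := by rw [tsum_mul_right, hC]
        _ = h * C := mul_comm _ _
    have h4 := hpos h h0 h1
    rw [h2] at h4
    linarith
  by_contra hneg
  push_neg at hneg
  obtain ⟨h, hh⟩ : ∃ h, h = min 1 (-(b 0) / (2 * (C + 1))) := ⟨_, rfl⟩
  have hhpos : 0 < h := hh ▸ lt_min one_pos (div_pos (by linarith) (by positivity))
  have hh1 : h ≤ 1 := hh ▸ min_le_left _ _
  have hb0 := main h hhpos hh1
  have hle : h ≤ -(b 0) / (2 * (C + 1)) := hh ▸ min_le_right _ _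
  have hCp : (0:ℝ) < 2 * (C + 1) := by positivity
  have hmul : h * C ≤ (-(b 0) / (2 * (C + 1))) * C :=
    mul_le_mul_of_nonneg_right hle hCnn
  have hkey : (-(b 0) / (2 * (C + 1))) * C < -(b 0) / 2 := by
    rw [div_mul_eq_mul_div, div_lt_div_iff₀ hCp (by norm_num : (0:ℝ) < 2)]
    nlinarith
  linarith

lemma key_lemma' {b : ℕ → ℝ} (hb : Summable fun j => |b j|) (h0 : b 0 = 0)
    (hpos : ∀ h : ℝ, 0 < h → h ≤ 1 → 0 ≤ ∑' j, b j * h ^ j) : 0 ≤ b 1 := by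
  have := key_lemma (b := fun j => b (j + 1)) ((summable_nat_add_iff (f := fun j => |b j|) 1).2 hb) ?_
  · exact this
  intro h hh h1
  have habs : ∀ j : ℕ, |b j * h ^ j| ≤ |b j| := by
    intro j
    rw [abs_mul, abs_pow, abs_of_pos hh]
    exact mul_le_of_le_one_right (abs_nonneg _) (pow_le_one₀ hh.le h1)
  have hsum : Summable fun j => b j * h ^ j :=
    Summable.of_abs (hb.of_nonneg_of_le (fun _ => abs_nonneg _) habs)
  have key : ∑' j, b j * h ^ j = h * ∑' j, b (j + 1) * h ^ j := by
    rw [Summable.tsum_eq_zero_add hsum, h0]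
    simp only [pow_zero, mul_one, zero_mul, zero_add]
    rw [← tsum_mul_left]
    refine tsum_congr fun j => by ring
  have h4 := hpos h hh h1
  rw [key] at h4
  exact nonneg_of_mul_nonneg_right h4 hh

end Key

section MatrixLemmas

variable {a : ℕ → ℝ}

lemma pow_entries (x y d q r : ℝ) (hy : y ≠ 0) (hqr : q * r = y ^ 2 - d ^ 2) (n : ℕ) :
    (!![x + d, q; r, x - d] : Matrix (Fin 2) (Fin 2) ℝ) ^ n =
      !![((y + d) * (x + y) ^ n + (y - d) * (x - y) ^ n) / (2 * y),
           q * (((x + y) ^ n - (x - y) ^ n) / (2 * y));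
         r * (((x + y) ^ n - (x - y) ^ n) / (2 * y)),
           ((y - d) * (x + y) ^ n + (y + d) * (x - y) ^ n) / (2 * y)] := by
  induction n with
  | zero =>
    rw [pow_zero, Matrix.one_fin_two]
    congr 1 <;> ext i j <;> fin_cases i <;> fin_cases j <;> simp <;> field_simp <;> ring
  | succ n ih =>
    rw [pow_succ, ih]
    ext i j
    fin_cases i <;> fin_cases j <;>
      simp [Matrix.mul_apply, Fin.sum_univ_two] <;> field_simp
    · linear_combination ((x + y) ^ n - (x - y) ^ n) * hqr
    · ring
    · ring
    · linear_combination ((x + y) ^ n - (x - y) ^ n) * hqr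

lemma pow_degen (x q r : ℝ) (hqr : q * r = 0) (n : ℕ) :
    (!![x, q; r, x] : Matrix (Fin 2) (Fin 2) ℝ) ^ n =
      !![x ^ n, ((n : ℝ) * x ^ (n - 1)) * q; ((n : ℝ) * x ^ (n - 1)) * r, x ^ n] := by
  induction n with
  | zero =>
    rw [pow_zero, Matrix.one_fin_two]
    norm_num
  | succ n ih =>
    rw [pow_succ, ih]
    have hc : ((n : ℝ) * x ^ (n - 1)) * x = (n : ℝ) * x ^ n := by
      cases n with
      | zero => simp
      | succ m => simp only [Nat.add_sub_cancel]; ring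
    ext i j
    fin_cases i <;> fin_cases j <;> simp [Matrix.mul_apply, Fin.sum_univ_two]
    · rcases mul_eq_zero.1 hqr with h | h <;> simp [h, pow_succ]
    · linear_combination q * hc
    · linear_combination r * hc
    · rcases mul_eq_zero.1 hqr with h | h <;> simp [h, pow_succ]


lemma fmat_generic (ha : ∀ r : ℝ, Summable fun j : ℕ => |a j| * r ^ j)
    (x y d q r : ℝ) (hy : y ≠ 0) (hqr : q * r = y ^ 2 - d ^ 2) :
    fmat a !![x + d, q; r, x - d] =
      !![((y + d) * fR a (x + y) + (y - d) * fR a (x - y)) / (2 * y),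
           q * ((fR a (x + y) - fR a (x - y)) / (2 * y));
         r * ((fR a (x + y) - fR a (x - y)) / (2 * y)),
           ((y - d) * fR a (x + y) + (y + d) * fR a (x - y)) / (2 * y)] := by
  apply fmat_eq
  have h1 := hasSum_fR ha (x + y)
  have h2 := hasSum_fR ha (x - y)
  intro i j
  simp only [pow_entries x y d q r hy hqr]
  fin_cases i <;> fin_cases j <;> simp
  · exact (((h1.mul_left (y + d)).add (h2.mul_left (y - d))).div_const (2 * y)).of_eq
      fun n => by ring
  · exact (((h1.sub h2).div_const (2 * y)).mul_left q).of_eq fun n => by ring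
  · exact (((h1.sub h2).div_const (2 * y)).mul_left r).of_eq fun n => by ring
  · exact (((h1.mul_left (y - d)).add (h2.mul_left (y + d))).div_const (2 * y)).of_eq
      fun n => by ring

lemma fmat_degen (ha : ∀ r : ℝ, Summable fun j : ℕ => |a j| * r ^ j)
    (x q r : ℝ) (hx : 0 ≤ x) (hqr : q * r = 0) :
    fmat a !![x, q; r, x] =
      !![fR a x, (∑' n : ℕ, a n * ((n : ℝ) * x ^ (n - 1))) * q;
         (∑' n : ℕ, a n * ((n : ℝ) * x ^ (n - 1))) * r, fR a x] := by
  apply fmat_eq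
  intro i j
  simp only [pow_degen x q r hqr]
  fin_cases i <;> fin_cases j <;> simp
  · exact (hasSum_fR ha x).of_eq fun n => rfl
  · exact (((summable_S ha hx).hasSum).mul_right q).of_eq fun n => by ring
  · exact (((summable_S ha hx).hasSum).mul_right r).of_eq fun n => by ring
  · exact (hasSum_fR ha x).of_eq fun n => rfl

end MatrixLemmas

section Analytic

variable {a : ℕ → ℝ}

lemma abs_tsum_le' {f : ℕ → ℝ} (hf : Summable fun n => |f n|) :
    |∑' n, f n| ≤ ∑' n, |f n| := by
  have h2 : Summable fun n => ‖f n‖ := by simpa [Real.norm_eq_abs] using hf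
  simpa [Real.norm_eq_abs] using norm_tsum_le_tsum_norm h2

lemma a0_nonneg (ha : ∀ r : ℝ, Summable fun j : ℕ => |a j| * r ^ j)
    (h2' : ∀ x y : ℝ, 0 ≤ x → x ≤ y →
      0 ≤ (x + y) * fR a (x - y) + (y - x) * fR a (x + y)) : 0 ≤ a 0 := by
  have hkey := key_lemma (b := fun j => a j * (1 + (-1) ^ j)) ?_ ?_
  · norm_num at hkey; linarith
  · refine ((ha 1).mul_left 2).of_nonneg_of_le (fun _ => abs_nonneg _) fun j => ?_
    rw [abs_mul]
    have h2 : |1 + (-1 : ℝ) ^ j| ≤ 2 := by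
      rcases Nat.even_or_odd j with h | h <;> simp [h.neg_one_pow] <;> norm_num
    calc |a j| * |1 + (-1:ℝ)^j| ≤ |a j| * 2 := mul_le_mul_of_nonneg_left h2 (abs_nonneg _)
      _ = 2 * (|a j| * 1 ^ j) := by rw [one_pow]; ring
  · intro h h0 _
    have e : ∑' j, (a j * (1 + (-1) ^ j)) * h ^ j = fR a h + fR a (-h) :=
      (((hasSum_fR ha h).add (hasSum_fR ha (-h))).of_eq fun n => by
        rw [neg_pow]; ring).tsum_eq
    rw [e]
    have h3 := h2' 0 h le_rfl h0.le
    rw [zero_add, zero_sub, sub_zero] at h3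
    nlinarith

lemma S_nonneg (ha : ∀ r : ℝ, Summable fun j : ℕ => |a j| * r ^ j)
    (h1 : ∀ x y : ℝ, 0 ≤ x → 0 ≤ y → 0 ≤ fR a (x + y) - fR a (x - y))
    {x : ℝ} (hx : 0 ≤ x) :
    0 ≤ ∑' n : ℕ, a n * ((n : ℝ) * x ^ (n - 1)) := by
  set t : ℕ → ℝ := fun j => ∑' m : ℕ, a m * ((m.choose j : ℝ) * x ^ (m - j)) with ht
  set b : ℕ → ℝ := fun j => (1 - (-1) ^ j) * t j with hb
  have hts : ∀ j : ℕ, Summable fun m : ℕ => a m * ((m.choose j : ℝ) * x ^ (m - j)) := by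
    intro j
    refine Summable.of_abs ((ha (x + 1)).of_nonneg_of_le (fun _ => abs_nonneg _) fun m => ?_)
    rw [abs_mul, abs_of_nonneg (show (0:ℝ) ≤ (m.choose j : ℝ) * x ^ (m - j) by positivity)]
    exact mul_le_mul_of_nonneg_left (choose_mul_pow_le hx m j) (abs_nonneg _)
  have hFabs : Summable (fun p : ℕ × ℕ => |a p.1| * ((p.1.choose p.2 : ℝ) * x ^ (p.1 - p.2))) := by
    rw [summable_prod_of_nonneg (fun p => by positivity)]
    constructor
    · intro m
      apply summable_of_ne_finset_zero (s := Finset.range (m + 1))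
      intro j hj
      rw [Finset.mem_range, not_lt] at hj
      rw [Nat.choose_eq_zero_of_lt (by omega)]
      simp
    · refine Summable.congr (ha (x + 1)) fun m => ?_
      exact (((hasSum_binomial x 1 m).mul_left |a m|).of_eq fun j => by
        rw [one_pow]; ring).tsum_eq.symm
  have hwb : Summable fun j => |b j| := by
    have hswap : Summable (fun p : ℕ × ℕ => |a p.2| * ((p.2.choose p.1 : ℝ) * x ^ (p.2 - p.1))) :=
      hFabs.prod_symm
    have hcol : Summable fun j : ℕ => ∑' m : ℕ, |a m| * ((m.choose j : ℝ) * x ^ (m - j)) :=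
      ((summable_prod_of_nonneg (fun p => by positivity)).1 hswap).2
    refine (hcol.mul_left 2).of_nonneg_of_le (fun _ => abs_nonneg _) fun j => ?_
    have habs_t : |t j| ≤ ∑' m : ℕ, |a m| * ((m.choose j : ℝ) * x ^ (m - j)) := by
      rw [ht]
      have step := abs_tsum_le' (f := fun m => a m * ((m.choose j : ℝ) * x ^ (m - j))) ?_
      · refine step.trans (le_of_eq (tsum_congr fun m => ?_))
        rw [abs_mul, abs_of_nonneg (show (0:ℝ) ≤ (m.choose j : ℝ) * x ^ (m - j) by positivity)]
      · exact (hts j).abs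
    have h2 : |1 - (-1 : ℝ) ^ j| ≤ 2 := by
      rcases Nat.even_or_odd j with h | h <;> simp [h.neg_one_pow] <;> norm_num
    calc |b j| = |1 - (-1:ℝ)^j| * |t j| := by rw [hb]; exact abs_mul _ _
      _ ≤ 2 * |t j| := mul_le_mul_of_nonneg_right h2 (abs_nonneg _)
      _ ≤ 2 * ∑' m : ℕ, |a m| * ((m.choose j : ℝ) * x ^ (m - j)) := by linarith [habs_t]
  have hb0 : b 0 = 0 := by simp [hb]
  have hpos : ∀ h : ℝ, 0 < h → h ≤ 1 → 0 ≤ ∑' j, b j * h ^ j := by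
    intro h h0 _
    have hF2 : Summable (fun p : ℕ × ℕ =>
        |a p.1| * ((p.1.choose p.2 : ℝ) * x ^ (p.1 - p.2) * h ^ p.2)) := by
      rw [summable_prod_of_nonneg (fun p => by positivity)]
      constructor
      · intro m
        apply summable_of_ne_finset_zero (s := Finset.range (m + 1))
        intro j hj
        rw [Finset.mem_range, not_lt] at hj
        rw [Nat.choose_eq_zero_of_lt (by omega)]
        simp
      · refine Summable.congr (ha (x + h)) fun m => ?_
        exact (((hasSum_binomial x h m).mul_left |a m|).of_eq fun j => by
          ring).tsum_eq.symm
    have hG : Summable (fun p : ℕ × ℕ =>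
        a p.1 * ((p.1.choose p.2 : ℝ) * x ^ (p.1 - p.2) * (h ^ p.2 - (-h) ^ p.2))) := by
      refine Summable.of_abs ((hF2.mul_left 2).of_nonneg_of_le (fun _ => abs_nonneg _)
        fun p => ?_)
      rw [abs_mul]
      have hd : |(p.1.choose p.2 : ℝ) * x ^ (p.1 - p.2) * (h ^ p.2 - (-h) ^ p.2)|
          ≤ (p.1.choose p.2 : ℝ) * x ^ (p.1 - p.2) * (2 * h ^ p.2) := by
        rw [abs_mul, abs_of_nonneg (show (0:ℝ) ≤ (p.1.choose p.2 : ℝ) * x ^ (p.1 - p.2) by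
          positivity)]
        refine mul_le_mul_of_nonneg_left ?_ (by positivity)
        calc |h ^ p.2 - (-h) ^ p.2| ≤ |h ^ p.2| + |(-h) ^ p.2| := abs_sub _ _
          _ = 2 * h ^ p.2 := by
              rw [abs_pow, abs_pow, abs_of_pos h0, abs_neg, abs_of_pos h0]; ring
      calc |a p.1| * |(p.1.choose p.2 : ℝ) * x ^ (p.1 - p.2) * (h ^ p.2 - (-h) ^ p.2)|
          ≤ |a p.1| * ((p.1.choose p.2 : ℝ) * x ^ (p.1 - p.2) * (2 * h ^ p.2)) :=
            mul_le_mul_of_nonneg_left hd (abs_nonneg _)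
        _ = 2 * (|a p.1| * ((p.1.choose p.2 : ℝ) * x ^ (p.1 - p.2) * h ^ p.2)) := by ring
    have inner2 : ∀ j : ℕ, HasSum
        (fun m => a m * ((m.choose j : ℝ) * x ^ (m - j) * (h ^ j - (-h) ^ j))) (b j * h ^ j) := by
      intro j
      have hv : t j * (h ^ j - (-h) ^ j) = b j * h ^ j := by
        rw [hb, neg_pow]; ring
      rw [← hv]
      exact ((hts j).hasSum.mul_right (h ^ j - (-h) ^ j)).of_eq fun m => by ring
    have inner1 : ∀ m : ℕ, HasSum
        (fun j => a m * ((m.choose j : ℝ) * x ^ (m - j) * (h ^ j - (-h) ^ j)))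
        (a m * ((x + h) ^ m - (x - h) ^ m)) := by
      intro m
      have hsub : HasSum (fun j => (m.choose j : ℝ) * x ^ (m - j) * h ^ j
          - (m.choose j : ℝ) * x ^ (m - j) * (-h) ^ j) ((x + h) ^ m - (x - h) ^ m) := by
        have := (hasSum_binomial x h m).sub (hasSum_binomial x (-h) m)
        rwa [← sub_eq_add_neg] at this
      exact (hsub.mul_left (a m)).of_eq fun j => by ring
    have echain : ∑' j, b j * h ^ j = fR a (x + h) - fR a (x - h) := by
      calc ∑' j, b j * h ^ j
          = ∑' (j : ℕ) (m : ℕ), a m * ((m.choose j : ℝ) * x ^ (m - j) * (h ^ j - (-h) ^ j)) :=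
            tsum_congr fun j => (inner2 j).tsum_eq.symm
        _ = ∑' (m : ℕ) (j : ℕ), a m * ((m.choose j : ℝ) * x ^ (m - j) * (h ^ j - (-h) ^ j)) :=
            Summable.tsum_comm hG
        _ = ∑' (m : ℕ), a m * ((x + h) ^ m - (x - h) ^ m) :=
            tsum_congr fun m => (inner1 m).tsum_eq
        _ = fR a (x + h) - fR a (x - h) :=
            (((hasSum_fR ha (x + h)).sub (hasSum_fR ha (x - h))).of_eq fun m => by
              ring).tsum_eq
    rw [echain]
    exact h1 x h hx h0.le
  have hfin := key_lemma' hwb hb0 hpos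
  have hb1 : b 1 = 2 * t 1 := by rw [hb]; norm_num
  have ht1 : t 1 = ∑' n : ℕ, a n * ((n : ℝ) * x ^ (n - 1)) := by
    rw [ht]
    exact tsum_congr fun m => by rw [Nat.choose_one_right]
  rw [← ht1]
  linarith

end Analytic

section Final

variable {a : ℕ → ℝ}

lemma f_nonneg (ha : ∀ r : ℝ, Summable fun j : ℕ => |a j| * r ^ j)
    (h1 : ∀ x y : ℝ, 0 ≤ x → 0 ≤ y → 0 ≤ fR a (x + y) - fR a (x - y))
    (h2' : ∀ x y : ℝ, 0 ≤ x → x ≤ y →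
      0 ≤ (x + y) * fR a (x - y) + (y - x) * fR a (x + y))
    {t : ℝ} (ht : 0 ≤ t) : 0 ≤ fR a t := by
  rcases eq_or_lt_of_le ht with h | h
  · rw [← h, fR_zero]
    exact a0_nonneg ha h2'
  · have ha1 := h1 0 t le_rfl ht
    have ha2 := h2' 0 t le_rfl ht
    rw [zero_add, zero_sub] at ha1 ha2
    nlinarith

lemma real_ineq {f : ℝ → ℝ}
    (hf0 : ∀ t : ℝ, 0 ≤ t → 0 ≤ f t)
    (h1 : ∀ x y : ℝ, 0 ≤ x → 0 ≤ y → 0 ≤ f (x + y) - f (x - y))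
    (h2' : ∀ x y : ℝ, 0 ≤ x → x ≤ y → 0 ≤ (x + y) * f (x - y) + (y - x) * f (x + y))
    {x y d : ℝ} (hx : 0 ≤ x) (hy : 0 < y) (hdx : |d| ≤ x) (hdy : |d| ≤ y) :
    0 ≤ (y + d) * f (x + y) + (y - d) * f (x - y) := by
  rw [abs_le] at hdx hdy
  rcases le_or_gt y x with hcase | hcase
  · have hfxy : 0 ≤ f (x - y) := hf0 _ (by linarith)
    have hmono := h1 x y hx hy.le
    nlinarith
  · have h2 := h2' x y hx hcase.le
    have hfxy : 0 ≤ f (x + y) := hf0 _ (by linarith)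
    rcases le_or_gt 0 (f (x - y)) with hs | hs
    · nlinarith
    · nlinarith [mul_nonneg (show (0:ℝ) ≤ d + x by linarith) hfxy,
        mul_nonneg (show (0:ℝ) ≤ d + x by linarith) (show (0:ℝ) ≤ -f (x - y) by linarith)]

end Final

section Main

variable {a : ℕ → ℝ}

lemma dir_C3 (ha : ∀ r : ℝ, Summable fun j : ℕ => |a j| * r ^ j)
    (h1 : ∀ x y : ℝ, 0 ≤ x → 0 ≤ y → 0 ≤ fR a (x + y) - fR a (x - y))
    (h2' : ∀ x y : ℝ, 0 ≤ x → x ≤ y →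
      0 ≤ (x + y) * fR a (x - y) + (y - x) * fR a (x + y)) :
    ∀ A : Matrix (Fin 2) (Fin 2) ℝ, (∀ i j, 0 ≤ A i j) → ∀ i j, 0 ≤ fmat a A i j := by
  intro A hA
  have hf0 : ∀ t : ℝ, 0 ≤ t → 0 ≤ fR a t := fun t ht => f_nonneg ha h1 h2' ht
  obtain ⟨p, q, r, s, hrep⟩ : ∃ p q r s, A = !![p, q; r, s] :=
    ⟨_, _, _, _, Matrix.eta_fin_two A⟩
  subst hrep
  have hp : (0:ℝ) ≤ p := by simpa using hA 0 0
  have hq : (0:ℝ) ≤ q := by simpa using hA 0 1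
  have hr : (0:ℝ) ≤ r := by simpa using hA 1 0
  have hs : (0:ℝ) ≤ s := by simpa using hA 1 1
  obtain ⟨x, hx⟩ : ∃ x : ℝ, x = (p + s) / 2 := ⟨_, rfl⟩
  obtain ⟨d, hd⟩ : ∃ d : ℝ, d = (p - s) / 2 := ⟨_, rfl⟩
  obtain ⟨y, hy⟩ : ∃ y : ℝ, y = Real.sqrt (d ^ 2 + q * r) := ⟨_, rfl⟩
  have hx0 : 0 ≤ x := by rw [hx]; linarith
  have hqr0 : 0 ≤ q * r := mul_nonneg hq hr
  have hyval : y ^ 2 = d ^ 2 + q * r := by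
    rw [hy]; exact Real.sq_sqrt (by positivity)
  have hynn : 0 ≤ y := hy ▸ Real.sqrt_nonneg _
  have hdy : |d| ≤ y := by
    rw [hy, ← Real.sqrt_sq_eq_abs]
    exact Real.sqrt_le_sqrt (by nlinarith)
  have hdx : |d| ≤ x := by
    rw [abs_le]; constructor <;> rw [hx, hd] <;> linarith
  have hpeq : p = x + d := by rw [hx, hd]; ring
  have hseq : s = x - d := by rw [hx, hd]; ring
  rcases hynn.eq_or_lt with hy0 | hy0
  · -- degenerate case
    have hzero : d ^ 2 + q * r = 0 := by rw [← hyval, ← hy0]; ring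
    have hd0 : d = 0 := by nlinarith [sq_nonneg d]
    have hqr : q * r = 0 := by nlinarith [sq_nonneg d]
    have hrepx : (!![p, q; r, s] : Matrix (Fin 2) (Fin 2) ℝ) = !![x, q; r, x] := by
      rw [hpeq, hseq, hd0, add_zero, sub_zero]
    rw [hrepx, fmat_degen ha x q r hx0 hqr]
    have hS := S_nonneg ha h1 hx0
    intro i j
    fin_cases i <;> fin_cases j <;> simp
    · exact hf0 x hx0
    · exact mul_nonneg hS hq
    · exact mul_nonneg hS hr
    · exact hf0 x hx0
  · -- generic case
    have hrepx : (!![p, q; r, s] : Matrix (Fin 2) (Fin 2) ℝ) = !![x + d, q; r, x - d] := by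
      rw [hpeq, hseq]
    rw [hrepx, fmat_generic ha x y d q r hy0.ne' (by linarith)]
    have hoffd : 0 ≤ (fR a (x + y) - fR a (x - y)) / (2 * y) :=
      div_nonneg (h1 x y hx0 hynn) (by linarith)
    intro i j
    fin_cases i <;> fin_cases j <;> simp
    · exact div_nonneg (real_ineq hf0 h1 h2' hx0 hy0 hdx hdy) (by linarith)
    · exact mul_nonneg hq hoffd
    · exact mul_nonneg hr hoffd
    · have hmd : |(-d)| ≤ x := by rwa [abs_neg]
      have hmd' : |(-d)| ≤ y := by rwa [abs_neg]
      have := real_ineq hf0 h1 h2' hx0 hy0 hmd hmd'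
      have e : (y - d) * fR a (x + y) + (y + d) * fR a (x - y)
          = (y + -d) * fR a (x + y) + (y - -d) * fR a (x - y) := by ring
      rw [e]
      exact div_nonneg this (by linarith)

end Main
section Main2

variable {a : ℕ → ℝ}

lemma dir_C1 (ha : ∀ r : ℝ, Summable fun j : ℕ => |a j| * r ^ j)
    (hM : ∀ A : Matrix (Fin 2) (Fin 2) ℝ, (∀ i j, 0 ≤ A i j) → ∀ i j, 0 ≤ fmat a A i j) :
    (∀ x y : ℝ, 0 ≤ x → 0 ≤ y → 0 ≤ fR a (x + y) - fR a (x - y)) ∧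
    (∀ x y z : ℝ, 0 ≤ z → z ≤ x → x - z ≤ y →
      0 ≤ (x + y - z) * fR a (x - y) + (z - x + y) * fR a (x + y)) := by
  constructor
  · intro x y hx hy
    rcases hy.eq_or_lt with h | h
    · rw [← h]; simp
    · have hE := fmat_generic ha x y 0 y y h.ne' (by ring)
      have hnn : ∀ i j, 0 ≤ (!![x + 0, y; y, x - 0] : Matrix (Fin 2) (Fin 2) ℝ) i j := by
        intro i j; fin_cases i <;> fin_cases j <;> simp <;> linarith
      have hent := hM _ hnn 0 1
      rw [hE] at hent
      simp only [Matrix.cons_val', Matrix.cons_val_zero, Matrix.cons_val_one,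
        Matrix.head_cons, Matrix.empty_val', Matrix.cons_val_fin_one, Matrix.head_fin_const,
        Matrix.of_apply] at hent
      -- hent : 0 ≤ y * ((fR a (x+y) - fR a (x-y)) / (2*y))
      have h2 : 0 ≤ (fR a (x + y) - fR a (x - y)) / (2 * y) :=
        nonneg_of_mul_nonneg_right hent h
      have h3 := mul_nonneg h2 (show (0:ℝ) ≤ 2 * y by linarith)
      rwa [div_mul_cancel₀] at h3
      linarith
  · intro x y z hz hzx hxzy
    have hy0 : 0 ≤ y := le_trans (by linarith) hxzy
    rcases hy0.eq_or_lt with h | h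
    · have hzxe : z = x := by linarith
      have he : (x + y - z) * fR a (x - y) + (z - x + y) * fR a (x + y) = 0 := by
        rw [hzxe, ← h]; ring
      rw [he]
    · have hE := fmat_generic ha x y (x - z) (y - (x - z)) (y + (x - z)) h.ne' (by ring)
      have hnn : ∀ i j, 0 ≤ (!![x + (x - z), y - (x - z); y + (x - z), x - (x - z)] :
          Matrix (Fin 2) (Fin 2) ℝ) i j := by
        intro i j; fin_cases i <;> fin_cases j <;> simp <;> linarith
      have hent := hM _ hnn 1 1
      rw [hE] at hent
      simp only [Matrix.cons_val', Matrix.cons_val_zero, Matrix.cons_val_one,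
        Matrix.head_cons, Matrix.empty_val', Matrix.cons_val_fin_one, Matrix.head_fin_const,
        Matrix.of_apply] at hent
      -- hent : 0 ≤ ((y - (x-z)) * fR a (x+y) + (y + (x-z)) * fR a (x-y)) / (2*y)
      have h3 := mul_nonneg hent (show (0:ℝ) ≤ 2 * y by linarith)
      rw [div_mul_cancel₀] at h3
      · have he : (x + y - z) * fR a (x - y) + (z - x + y) * fR a (x + y)
            = (y - (x - z)) * fR a (x + y) + (y + (x - z)) * fR a (x - y) := by ring
        rw [he]; exact h3
      · linarith

end Main2


/-- `f ∈ F_2` iff conditions (1) and (2) hold, and also iff conditions (1)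
and (2') hold, where
(1): `f(x+y) - f(x-y) ≥ 0` for all `x, y ≥ 0`;
(2): `(x+y-z) f(x-y) + (z-x+y) f(x+y) ≥ 0` for all `x ≥ z ≥ 0`, `y ≥ x-z`;
(2'): `(x+y) f(x-y) + (y-x) f(x+y) ≥ 0` for all `y ≥ x ≥ 0`. -/
theorem stmt_12 (a : ℕ → ℝ) (ha : ∀ r : ℝ, Summable fun j : ℕ => |a j| * r ^ j) :
    ((∀ A : Matrix (Fin 2) (Fin 2) ℝ,
        (∀ i j, 0 ≤ A i j) → ∀ i j, 0 ≤ fmat a A i j) ↔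
      ((∀ x y : ℝ, 0 ≤ x → 0 ≤ y → 0 ≤ fR a (x + y) - fR a (x - y)) ∧
       (∀ x y z : ℝ, 0 ≤ z → z ≤ x → x - z ≤ y →
         0 ≤ (x + y - z) * fR a (x - y) + (z - x + y) * fR a (x + y)))) ∧
    ((∀ A : Matrix (Fin 2) (Fin 2) ℝ,
        (∀ i j, 0 ≤ A i j) → ∀ i j, 0 ≤ fmat a A i j) ↔
      ((∀ x y : ℝ, 0 ≤ x → 0 ≤ y → 0 ≤ fR a (x + y) - fR a (x - y)) ∧
       (∀ x y : ℝ, 0 ≤ x → x ≤ y →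
         0 ≤ (x + y) * fR a (x - y) + (y - x) * fR a (x + y)))) := by
  have hC2 : (∀ x y z : ℝ, 0 ≤ z → z ≤ x → x - z ≤ y →
      0 ≤ (x + y - z) * fR a (x - y) + (z - x + y) * fR a (x + y)) →
      (∀ x y : ℝ, 0 ≤ x → x ≤ y →
        0 ≤ (x + y) * fR a (x - y) + (y - x) * fR a (x + y)) := by
    intro h2 x y hx hxy
    have := h2 x y 0 le_rfl hx (by linarith)
    have he : (x + y - 0) * fR a (x - y) + (0 - x + y) * fR a (x + y)
        = (x + y) * fR a (x - y) + (y - x) * fR a (x + y) := by ring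
    rw [he] at this
    exact this
  constructor
  · constructor
    · exact dir_C1 ha
    · rintro ⟨h1, h2⟩
      exact dir_C3 ha h1 (hC2 h2)
  · constructor
    · intro hM
      obtain ⟨h1, h2⟩ := dir_C1 ha hM
      exact ⟨h1, hC2 h2⟩
    · rintro ⟨h1, h2'⟩
      exact dir_C3 ha h1 h2'
end

section
/- Let f(x) = 1 + x + (1/2)x² − (2/3)x³ + (1/4)x⁴. Then f(x) ≥ 0 and f'(x) ≥ 0 for all x ≥ 0, yet for every real M > √(3/2), the entrywise nonnegative (but not positive semidefinite) symmetric 2×2 matrix A = [[0, M], [M, 0]] satisfies that f(A) has strictly negative off-diagonal entries. Hence nonnegativity of f and f' on the nonnegative reals is not sufficient for f to preserve nonnegativity of all nonnegative symmetric 2×2 matrices. -/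
/-- Evaluation of the polynomial `f(x) = 1 + x + x²/2 - (2/3)x³ + (1/4)x⁴`
at a 2×2 real matrix. -/
noncomputable def fmat13 (A : Matrix (Fin 2) (Fin 2) ℝ) : Matrix (Fin 2) (Fin 2) ℝ :=
  1 + A + (1 / 2 : ℝ) • A ^ 2 - (2 / 3 : ℝ) • A ^ 3 + (1 / 4 : ℝ) • A ^ 4

/-- The function `f(x) = 1 + x + x²/2 - (2/3)x³ + (1/4)x⁴` satisfies `f ≥ 0`
and `f' ≥ 0` on `ℝ₊`, yet for every `M > √(3/2)` the nonnegative (but not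
positive semidefinite) symmetric matrix `[[0,M],[M,0]]` is mapped to a matrix
with strictly negative off-diagonal entries. -/
theorem stmt_13 :
    (∀ x : ℝ, 0 ≤ x →
      0 ≤ 1 + x + (1 / 2) * x ^ 2 - (2 / 3) * x ^ 3 + (1 / 4) * x ^ 4 ∧
      0 ≤ deriv (fun t : ℝ =>
        1 + t + (1 / 2) * t ^ 2 - (2 / 3) * t ^ 3 + (1 / 4) * t ^ 4) x) ∧
    (∀ M : ℝ, Real.sqrt (3 / 2) < M →
      (∀ i j, 0 ≤ (!![0, M; M, 0] : Matrix (Fin 2) (Fin 2) ℝ) i j) ∧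
      ¬ (!![0, M; M, 0] : Matrix (Fin 2) (Fin 2) ℝ).PosSemidef ∧
      (!![0, M; M, 0] : Matrix (Fin 2) (Fin 2) ℝ).IsSymm ∧
      fmat13 !![0, M; M, 0] 0 1 < 0 ∧ fmat13 !![0, M; M, 0] 1 0 < 0) := by
  constructor
  · intro x hx
    constructor
    · nlinarith [sq_nonneg (x - 1), sq_nonneg x, sq_nonneg (x^2 - x), sq_nonneg (x^2 - 2*x)]
    · have hd : deriv (fun t : ℝ =>
          1 + t + (1 / 2) * t ^ 2 - (2 / 3) * t ^ 3 + (1 / 4) * t ^ 4) x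
          = 1 + x - 2 * x ^ 2 + x ^ 3 := by
        have : HasDerivAt (fun t : ℝ =>
            1 + t + (1 / 2) * t ^ 2 - (2 / 3) * t ^ 3 + (1 / 4) * t ^ 4)
            (1 + x - 2 * x ^ 2 + x ^ 3) x := by
          have h := ((((hasDerivAt_const x (1:ℝ)).add (hasDerivAt_id x)).add
            ((hasDerivAt_pow 2 x).const_mul (1/2:ℝ))).sub
            ((hasDerivAt_pow 3 x).const_mul (2/3:ℝ))).add
            ((hasDerivAt_pow 4 x).const_mul (1/4:ℝ))
          refine h.congr_deriv ?_
          ring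
        exact this.deriv
      rw [hd]
      nlinarith [sq_nonneg (x - 1), mul_nonneg hx (sq_nonneg (x - 1))]
  · intro M hM
    have h0 : (0:ℝ) ≤ Real.sqrt (3/2) := Real.sqrt_nonneg _
    have hMpos : 0 < M := lt_of_le_of_lt h0 hM
    have hM2 : 3/2 < M ^ 2 := by
      have := Real.sq_sqrt (by norm_num : (3/2:ℝ) ≥ 0)
      nlinarith [Real.sqrt_nonneg (3/2:ℝ)]
    refine ⟨?_, ?_, ?_, ?_, ?_⟩
    · intro i j
      fin_cases i <;> fin_cases j <;> simp [hMpos.le]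
    · intro hP
      have h := hP.dotProduct_mulVec_nonneg ![1, -1]
      simp [dotProduct, Matrix.mulVec, Fin.sum_univ_two] at h
      linarith
    · ext i j
      fin_cases i <;> fin_cases j <;> simp [Matrix.IsSymm]
    · simp only [fmat13, pow_succ, pow_zero, one_mul]
      norm_num [Matrix.mul_apply, Fin.sum_univ_two, Matrix.add_apply, Matrix.sub_apply,
        Matrix.smul_apply, Matrix.one_apply]
      nlinarith
    · simp only [fmat13, pow_succ, pow_zero, one_mul]
      norm_num [Matrix.mul_apply, Fin.sum_univ_two, Matrix.add_apply, Matrix.sub_apply,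
        Matrix.smul_apply, Matrix.one_apply]
      nlinarith
end

section
/- Let β > 1/4 and let α, γ > 0 be such that the polynomial f(z) = α + βz − z³ + z⁵ + γz⁶ satisfies f(x) ≥ 0 for all real x and f'(x) ≥ 0 for all x ≥ 0. Then f preserves nonnegativity of symmetric 2×2 matrices (f(A) is entrywise nonnegative for every entrywise nonnegative symmetric real 2×2 matrix A), but its odd part f_odd(z) = βz − z³ + z⁵ does not: there exists an entrywise nonnegative symmetric real 2×2 matrix B such that f_odd(B) has a negative entry. -/
/-- Evaluation of `f(z) = α + βz - z³ + z⁵ + γz⁶` at a 2×2 real matrix. -/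
noncomputable def fmat16 (α β γ : ℝ) (A : Matrix (Fin 2) (Fin 2) ℝ) :
    Matrix (Fin 2) (Fin 2) ℝ :=
  α • (1 : Matrix (Fin 2) (Fin 2) ℝ) + β • A - A ^ 3 + A ^ 5 + γ • A ^ 6

/-- Evaluation of the odd part `f_odd(z) = βz - z³ + z⁵` at a 2×2 real matrix. -/
noncomputable def fmat16odd (β : ℝ) (A : Matrix (Fin 2) (Fin 2) ℝ) :
    Matrix (Fin 2) (Fin 2) ℝ :=
  β • A - A ^ 3 + A ^ 5

/-!
An entrywise nonnegative symmetric matrix `A = [[a, b], [b, c]]` has real eigenvalues `μ ≤ λ`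
with `λ + μ = a + c ≥ 0`, i.e. `|μ| ≤ λ`, and `(A - λ)(A - μ) = 0`. Lagrange interpolation at
`λ, μ` then gives `(λ - μ) p(A) = p(λ) (A - μ) - p(μ) (A - λ)` for every polynomial `p`: the
diagonal entries of `p(A)` are convex combinations of `p(λ)` and `p(μ)`, and the off-diagonal
one is `b (p(λ) - p(μ)) / (λ - μ)`. So `p(A) ≥ 0` as soon as `p ≥ 0` and `p(μ) ≤ p(λ)` whenever
`|μ| ≤ λ`. For `f` the latter follows from `f' ≥ 0` on `[0, ∞)` if `μ ≥ 0`, and otherwise from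
`f(λ) - f(μ) = f_odd(λ) + f_odd(-μ) + γ (λ⁶ - μ⁶)`, where `f_odd(t) = t (t² - 1/2)² + (β - 1/4) t`.
The odd part fails at `B = [[0, 2/5], [2/5, 3/5]]`: as `B₀₀ = 0`, `f_odd(B)₀₀ = (B⁵ - B³)₀₀ < 0`.
-/

open Polynomial Set

section Interpolation

variable {R 𝒜 : Type*} [CommRing R] [Ring 𝒜] [Algebra R 𝒜]

theorem sub_smul_pow_eq_of_mul_sub_eq_zero {a : 𝒜} {l m : R}
    (h : (a - algebraMap R 𝒜 l) * (a - algebraMap R 𝒜 m) = 0) (n : ℕ) :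
    (l - m) • a ^ n = l ^ n • (a - algebraMap R 𝒜 m) - m ^ n • (a - algebraMap R 𝒜 l) := by
  induction n with
  | zero => simp only [pow_zero, one_smul, Algebra.algebraMap_eq_smul_one]; module
  | succ n ih =>
    have hsq : a * a = (l + m) • a - (l * m) • 1 := by
      rw [Algebra.algebraMap_eq_smul_one, Algebra.algebraMap_eq_smul_one] at h
      simp only [sub_mul, mul_sub, smul_mul_assoc, mul_smul_comm, one_mul, mul_one] at h
      rw [← sub_eq_zero, ← h]
      module
    rw [pow_succ, ← smul_mul_assoc, ih]
    simp only [sub_mul, smul_mul_assoc, Algebra.algebraMap_eq_smul_one, one_mul, hsq]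
    module

theorem sub_smul_aeval_eq_of_mul_sub_eq_zero {a : 𝒜} {l m : R}
    (h : (a - algebraMap R 𝒜 l) * (a - algebraMap R 𝒜 m) = 0) (p : R[X]) :
    (l - m) • aeval a p =
      p.eval l • (a - algebraMap R 𝒜 m) - p.eval m • (a - algebraMap R 𝒜 l) := by
  induction p using Polynomial.induction_on' with
  | add p q hp hq => simp only [map_add, eval_add, smul_add, hp, hq, add_smul]; abel
  | monomial n c =>
    simp only [aeval_monomial, eval_monomial, ← Algebra.smul_def, mul_smul]
    rw [smul_comm, sub_smul_pow_eq_of_mul_sub_eq_zero h, smul_sub]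

end Interpolation

theorem aeval_nonneg_of_mul_sub_eq_zero {n : Type*} [Fintype n] [DecidableEq n] (p : ℝ[X])
    {A : Matrix n n ℝ} {l m : ℝ}
    (hA : (A - algebraMap ℝ _ l) * (A - algebraMap ℝ _ m) = 0) (hml : m < l)
    (hnn : ∀ i j, 0 ≤ A i j) (hdiag : ∀ i, m ≤ A i i ∧ A i i ≤ l)
    (hl : 0 ≤ p.eval l) (hm : 0 ≤ p.eval m) (hlm : p.eval m ≤ p.eval l) (i j : n) :
    0 ≤ aeval A p i j := by
  have key := congrFun (congrFun (sub_smul_aeval_eq_of_mul_sub_eq_zero hA p) i) j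
  simp only [Matrix.smul_apply, Matrix.sub_apply, Matrix.algebraMap_matrix_apply,
    Algebra.algebraMap_self, RingHom.id_apply, smul_eq_mul] at key
  refine nonneg_of_mul_nonneg_right (key ▸ ?_) (sub_pos.2 hml)
  split_ifs with hij
  · subst hij
    nlinarith [hdiag i]
  · nlinarith [hnn i j]

theorem fin_two_symm_sub_mul_sub_eq_zero {a b c l m : ℝ} (hsum : l + m = a + c)
    (hprod : l * m = a * c - b ^ 2) :
    (!![a, b; b, c] - algebraMap ℝ _ l) * (!![a, b; b, c] - algebraMap ℝ _ m) = 0 := by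
  obtain rfl : l = a + c - m := by linarith
  ext i j
  fin_cases i <;> fin_cases j <;>
    simp only [Matrix.mul_apply, Fin.sum_univ_two, Matrix.zero_apply, Matrix.sub_apply,
      Matrix.algebraMap_matrix_apply, Matrix.of_apply, Matrix.cons_val', Matrix.cons_val_zero,
      Matrix.cons_val_one, Matrix.cons_val_fin_one, Fin.zero_eta, Fin.mk_one, Fin.isValue,
      Algebra.algebraMap_self, RingHom.id_apply, if_true, if_false, zero_ne_one, one_ne_zero] <;>
    first | linear_combination hprod | ring

theorem aeval_fin_two_nonneg_of_isSymm (p : ℝ[X]) (hp : ∀ x, 0 ≤ p.eval x)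
    (hmono : ∀ m l, |m| ≤ l → p.eval m ≤ p.eval l) {A : Matrix (Fin 2) (Fin 2) ℝ}
    (hA : A.IsSymm) (hnn : ∀ i j, 0 ≤ A i j) (i j : Fin 2) :
    0 ≤ aeval A p i j := by
  obtain ⟨a, b, c, rfl⟩ : ∃ a b c, A = !![a, b; b, c] :=
    ⟨_, _, _, A.eta_fin_two.trans (by rw [hA.apply 0 1])⟩
  have ha : 0 ≤ a := hnn 0 0
  have hc : 0 ≤ c := hnn 1 1
  obtain ⟨s, hs_nonneg, hs2⟩ : ∃ s : ℝ, 0 ≤ s ∧ s ^ 2 = (a - c) ^ 2 + 4 * b ^ 2 :=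
    ⟨_, Real.sqrt_nonneg _, Real.sq_sqrt (by positivity)⟩
  obtain ⟨hac, hca⟩ := abs_le.1 (abs_le_of_sq_le_sq (by nlinarith) hs_nonneg : |a - c| ≤ s)
  rcases hs_nonneg.eq_or_lt with rfl | hs_pos
  · obtain ⟨rfl, hac_eq⟩ : b = 0 ∧ a = c := by constructor <;> nlinarith
    subst hac_eq
    have hscalar : !![a, 0; 0, a] = algebraMap ℝ (Matrix (Fin 2) (Fin 2) ℝ) a := by
      ext i j
      fin_cases i <;> fin_cases j <;> simp [Matrix.algebraMap_matrix_apply]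
    rw [hscalar, aeval_algebraMap_apply, Matrix.algebraMap_matrix_apply]
    split_ifs <;> simp [hp]
  · refine aeval_nonneg_of_mul_sub_eq_zero p (l := (a + c + s) / 2) (m := (a + c - s) / 2)
      (fin_two_symm_sub_mul_sub_eq_zero (by ring) (by linear_combination -hs2 / 4))
      (by linarith) hnn (fun k => ?_) (hp _) (hp _)
      (hmono _ _ (abs_le.2 ⟨by linarith, by linarith⟩)) i j
    fin_cases k
    exacts [show _ ≤ a ∧ a ≤ _ from ⟨by linarith, by linarith⟩,
      show _ ≤ c ∧ c ≤ _ from ⟨by linarith, by linarith⟩]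

noncomputable def fmat16Poly (α β γ : ℝ) : ℝ[X] :=
  C α + C β * X - X ^ 3 + X ^ 5 + C γ * X ^ 6

theorem eval_fmat16Poly (α β γ x : ℝ) :
    (fmat16Poly α β γ).eval x = α + β * x - x ^ 3 + x ^ 5 + γ * x ^ 6 := by
  simp [fmat16Poly]

theorem aeval_fmat16Poly (α β γ : ℝ) (A : Matrix (Fin 2) (Fin 2) ℝ) :
    aeval A (fmat16Poly α β γ) = fmat16 α β γ A := by
  simp [fmat16Poly, fmat16, Algebra.algebraMap_eq_smul_one]

theorem odd_part_nonneg {β t : ℝ} (hβ : 1 / 4 ≤ β) (ht : 0 ≤ t) :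
    0 ≤ β * t - t ^ 3 + t ^ 5 := by
  nlinarith [mul_nonneg ht (sq_nonneg (t ^ 2 - 1 / 2)), mul_nonneg (sub_nonneg.2 hβ) ht]

theorem sextic_le_of_abs_le {α β γ : ℝ} (hβ : 1 / 4 ≤ β) (hγ : 0 ≤ γ)
    (hf' : ∀ x : ℝ, 0 ≤ x →
      0 ≤ deriv (fun t : ℝ => α + β * t - t ^ 3 + t ^ 5 + γ * t ^ 6) x)
    {m l : ℝ} (h : |m| ≤ l) :
    α + β * m - m ^ 3 + m ^ 5 + γ * m ^ 6 ≤ α + β * l - l ^ 3 + l ^ 5 + γ * l ^ 6 := by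
  rcases le_or_gt 0 m with hm | hm
  · have hmono : MonotoneOn (fun t : ℝ => α + β * t - t ^ 3 + t ^ 5 + γ * t ^ 6) (Ici 0) :=
      monotoneOn_of_deriv_nonneg (convex_Ici (0 : ℝ)) (by fun_prop) (by fun_prop)
        fun x hx => hf' x (interior_subset hx)
    rw [abs_of_nonneg hm] at h
    exact hmono hm (hm.trans h) h
  · rw [abs_of_neg hm] at h
    have hpow : (-m) ^ 6 ≤ l ^ 6 := pow_le_pow_left₀ (by linarith) h 6
    nlinarith [odd_part_nonneg hβ (neg_nonneg.2 hm.le),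
      odd_part_nonneg hβ (by linarith : (0 : ℝ) ≤ l), mul_le_mul_of_nonneg_left hpow hγ]

theorem fmat16odd_counterexample (β : ℝ) :
    fmat16odd β !![0, 2 / 5; 2 / 5, 3 / 5] 0 0 = -96 / 3125 := by
  norm_num [fmat16odd, pow_succ]

theorem stmt_16_general (α β γ : ℝ) (hβ : 1 / 4 < β) (hγ : 0 < γ)
    (hf : ∀ x : ℝ, 0 ≤ α + β * x - x ^ 3 + x ^ 5 + γ * x ^ 6)
    (hf' : ∀ x : ℝ, 0 ≤ x →
      0 ≤ deriv (fun t : ℝ => α + β * t - t ^ 3 + t ^ 5 + γ * t ^ 6) x) :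
    (∀ A : Matrix (Fin 2) (Fin 2) ℝ, A.IsSymm → (∀ i j, 0 ≤ A i j) →
      ∀ i j, 0 ≤ fmat16 α β γ A i j) ∧
    (∃ B : Matrix (Fin 2) (Fin 2) ℝ, B.IsSymm ∧ (∀ i j, 0 ≤ B i j) ∧
      ∃ i j, fmat16odd β B i j < 0) := by
  refine ⟨fun A hA hnn i j => ?_, !![0, 2 / 5; 2 / 5, 3 / 5], ?_, ?_, 0, 0, ?_⟩
  · rw [← aeval_fmat16Poly]
    refine aeval_fin_two_nonneg_of_isSymm _ (fun x => ?_) (fun m l h => ?_) hA hnn i j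
    · exact eval_fmat16Poly α β γ x ▸ hf x
    · simpa only [eval_fmat16Poly] using sextic_le_of_abs_le hβ.le hγ.le hf' h
  · exact Matrix.IsSymm.ext fun i j => by fin_cases i <;> fin_cases j <;> rfl
  · intro i j
    fin_cases i <;> fin_cases j <;> norm_num
  · rw [fmat16odd_counterexample]
    norm_num

/-- For `β > 1/4` and `α, γ > 0` such that `f(z) = α + βz - z³ + z⁵ + γz⁶`
satisfies `f ≥ 0` on `ℝ` and `f' ≥ 0` on `ℝ₊`, the function `f` preserves
nonnegativity of symmetric 2×2 matrices but its odd part `βz - z³ + z⁵`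
does not. -/
theorem stmt_16 (α β γ : ℝ) (hβ : 1 / 4 < β) (hα : 0 < α) (hγ : 0 < γ)
    (hf : ∀ x : ℝ, 0 ≤ α + β * x - x ^ 3 + x ^ 5 + γ * x ^ 6)
    (hf' : ∀ x : ℝ, 0 ≤ x →
      0 ≤ deriv (fun t : ℝ => α + β * t - t ^ 3 + t ^ 5 + γ * t ^ 6) x) :
    (∀ A : Matrix (Fin 2) (Fin 2) ℝ, A.IsSymm → (∀ i j, 0 ≤ A i j) →
      ∀ i j, 0 ≤ fmat16 α β γ A i j) ∧
    (∃ B : Matrix (Fin 2) (Fin 2) ℝ, B.IsSymm ∧ (∀ i j, 0 ≤ B i j) ∧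
      ∃ i j, fmat16odd β B i j < 0) :=
  stmt_16_general α β γ hβ hγ hf hf'
end

section
/- Let f(z) = ∑_{j=0}^∞ a_j z^j be an entire function with real coefficients that preserves nonnegativity of symmetric n×n matrices (f(A) ≥ 0 entrywise for every entrywise nonnegative symmetric real n×n matrix A). Then both its even part f_even(z) = ∑_j a_{2j} z^{2j} and its odd part f_odd(z) = ∑_j a_{2j+1} z^{2j+1} preserve nonnegativity of symmetric ⌊n/2⌋×⌊n/2⌋ matrices: f_even(B) ≥ 0 and f_odd(B) ≥ 0 entrywise for every entrywise nonnegative symmetric real ⌊n/2⌋×⌊n/2⌋ matrix B. -/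
open Matrix

/-- Entrywise bound for powers of a matrix. -/
lemma pow_entry_bound {m : Type*} [Fintype m] [DecidableEq m] (A : Matrix m m ℝ) :
    ∃ r : ℝ, ∀ (j : ℕ) (i k : m), |(A ^ j) i k| ≤ r ^ j := by
  classical
  set c : ℝ := ∑ i : m, ∑ k : m, |A i k| with hc
  have hc0 : ∀ i k, |A i k| ≤ c := by
    intro i k
    calc |A i k| ≤ ∑ k : m, |A i k| :=
          Finset.single_le_sum (f := fun k => |A i k|) (fun _ _ => abs_nonneg _)
            (Finset.mem_univ k)
      _ ≤ c := Finset.single_le_sum (f := fun i => ∑ k : m, |A i k|)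
          (fun _ _ => Finset.sum_nonneg fun _ _ => abs_nonneg _) (Finset.mem_univ i)
  refine ⟨max 1 ((Fintype.card m : ℝ) * c), ?_⟩
  intro j
  induction j with
  | zero =>
    intro i k
    simp only [pow_zero, Matrix.one_apply]
    split <;> simp
  | succ j ih =>
    intro i k
    rw [pow_succ, Matrix.mul_apply]
    calc |∑ l, (A ^ j) i l * A l k| ≤ ∑ l, |(A ^ j) i l * A l k| := Finset.abs_sum_le_sum_abs _ _
      _ ≤ ∑ _l : m, (max 1 ((Fintype.card m : ℝ) * c)) ^ j * c := by
          refine Finset.sum_le_sum fun l _ => ?_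
          rw [abs_mul]
          exact mul_le_mul (ih i l) (hc0 l k) (abs_nonneg _)
            (pow_nonneg (le_trans zero_le_one (le_max_left _ _)) _)
      _ = ((Fintype.card m : ℝ) * c) * (max 1 ((Fintype.card m : ℝ) * c)) ^ j := by
          simp [Finset.sum_const]; ring
      _ ≤ (max 1 ((Fintype.card m : ℝ) * c)) ^ (j + 1) := by
          rw [pow_succ, mul_comm]
          exact mul_le_mul_of_nonneg_left (le_max_right _ _)
            (pow_nonneg (le_trans zero_le_one (le_max_left _ _)) _)

lemma summable_entries {m : Type*} [Fintype m] [DecidableEq m]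
    (M : ℕ → Matrix m m ℝ) (g : ℕ → ℝ) (hg : Summable g)
    (hb : ∀ j i k, |M j i k| ≤ g j) : Summable M := by
  have : Summable (fun j => fun i k => M j i k) := by
    apply Pi.summable.2; intro i; apply Pi.summable.2; intro k
    exact Summable.of_abs (hg.of_nonneg_of_le (fun j => abs_nonneg _) (fun j => hb j i k))
  exact this

lemma tsum_matrix_apply {m : Type*} [Fintype m] [DecidableEq m]
    (M : ℕ → Matrix m m ℝ) (h : Summable M) (i k : m) :
    (∑' j, M j) i k = ∑' j, M j i k := by
  erw [tsum_apply h, tsum_apply (Pi.summable.1 h i)]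

/-- The block matrix `[[0, B, 0], [B, 0, 0], [0, 0, 0]]`. -/
def blockC {m r : Type*} (B : Matrix m m ℝ) :
    Matrix ((m ⊕ m) ⊕ r) ((m ⊕ m) ⊕ r) ℝ :=
  fun x y => match x, y with
  | .inl (.inl i), .inl (.inr j) => B i j
  | .inl (.inr i), .inl (.inl j) => B i j
  | _, _ => 0

section blockC
variable {m r : Type*} (B : Matrix m m ℝ)

@[simp] lemma blockC_ll (i j : m) : blockC (r := r) B (.inl (.inl i)) (.inl (.inl j)) = 0 := rfl
@[simp] lemma blockC_lr (i j : m) : blockC (r := r) B (.inl (.inl i)) (.inl (.inr j)) = B i j := rfl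
@[simp] lemma blockC_rl (i j : m) : blockC (r := r) B (.inl (.inr i)) (.inl (.inl j)) = B i j := rfl
@[simp] lemma blockC_rr (i j : m) : blockC (r := r) B (.inl (.inr i)) (.inl (.inr j)) = 0 := rfl
@[simp] lemma blockC_xr (x : (m ⊕ m) ⊕ r) (t : r) : blockC B x (.inr t) = 0 := by
  rcases x with (x|x)|x <;> rfl
@[simp] lemma blockC_rx (t : r) (y : (m ⊕ m) ⊕ r) : blockC B (.inr t) y = 0 := by
  rcases y with (y|y)|y <;> rfl

lemma blockC_pow [Fintype m] [DecidableEq m] [Fintype r] [DecidableEq r] (k : ℕ) :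
    (∀ i j : m, (blockC (r := r) B ^ k) (.inl (.inl i)) (.inl (.inl j))
        = if Even k then (B ^ k) i j else 0) ∧
    (∀ i j : m, (blockC (r := r) B ^ k) (.inl (.inl i)) (.inl (.inr j))
        = if Even k then 0 else (B ^ k) i j) := by
  induction k with
  | zero =>
    constructor <;> intro i j <;>
      simp [Matrix.one_apply, Sum.inl.injEq, Sum.inr.injEq]
  | succ k ih =>
    obtain ⟨IH1, IH2⟩ := ih
    constructor
    · intro i j
      rw [pow_succ, Matrix.mul_apply, Fintype.sum_sum_type, Fintype.sum_sum_type]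
      simp only [blockC_ll, blockC_rl, blockC_rx, mul_zero, Finset.sum_const_zero,
        zero_add, add_zero, IH2]
      by_cases hk : Even k
      · simp [hk, Nat.even_add_one]
      · simp only [hk, if_false, Nat.even_add_one, not_false_iff, if_true, not_not]
        rw [pow_succ, Matrix.mul_apply]
    · intro i j
      rw [pow_succ, Matrix.mul_apply, Fintype.sum_sum_type, Fintype.sum_sum_type]
      simp only [blockC_lr, blockC_rr, blockC_rx, mul_zero, Finset.sum_const_zero,
        zero_add, add_zero, IH1]
      by_cases hk : Even k
      · simp only [hk, if_true, Nat.even_add_one, not_true, if_false, not_not]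
        rw [pow_succ, Matrix.mul_apply]
      · simp [hk, Nat.even_add_one]

end blockC

/-- `f_even(B) := ∑_{j=0}^∞ a_{2j} B^{2j}`. -/
noncomputable def fmatEven (a : ℕ → ℝ) {m : Type*} [Fintype m] [DecidableEq m]
    (B : Matrix m m ℝ) : Matrix m m ℝ :=
  ∑' j : ℕ, a (2 * j) • B ^ (2 * j)

/-- `f_odd(B) := ∑_{j=0}^∞ a_{2j+1} B^{2j+1}`. -/
noncomputable def fmatOdd (a : ℕ → ℝ) {m : Type*} [Fintype m] [DecidableEq m]
    (B : Matrix m m ℝ) : Matrix m m ℝ :=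
  ∑' j : ℕ, a (2 * j + 1) • B ^ (2 * j + 1)

/-- If `f` preserves nonnegativity of symmetric n×n matrices, then its even
and odd parts preserve nonnegativity of symmetric ⌊n/2⌋×⌊n/2⌋ matrices. -/
theorem stmt_17 (a : ℕ → ℝ) (ha : ∀ r : ℝ, Summable fun j : ℕ => |a j| * r ^ j)
    (n : ℕ)
    (h : ∀ A : Matrix (Fin n) (Fin n) ℝ, A.IsSymm → (∀ i j, 0 ≤ A i j) →
      ∀ i j, 0 ≤ fmat a A i j) :
    ∀ B : Matrix (Fin (n / 2)) (Fin (n / 2)) ℝ, B.IsSymm → (∀ i j, 0 ≤ B i j) →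
      (∀ i j, 0 ≤ fmatEven a B i j) ∧ (∀ i j, 0 ≤ fmatOdd a B i j) := by
  intro B hB hB0
  classical
  have hn : n / 2 + n / 2 + (n - 2 * (n / 2)) = n := by omega
  set R := Fin (n - 2 * (n / 2))
  let e : (Fin (n / 2) ⊕ Fin (n / 2)) ⊕ R ≃ Fin n :=
    ((Equiv.sumCongr finSumFinEquiv (Equiv.refl R)).trans finSumFinEquiv).trans (finCongr hn)
  set C : Matrix ((Fin (n / 2) ⊕ Fin (n / 2)) ⊕ R) ((Fin (n / 2) ⊕ Fin (n / 2)) ⊕ R) ℝ :=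
    blockC (r := R) B with hC
  set A : Matrix (Fin n) (Fin n) ℝ := (Matrix.reindexAlgEquiv ℝ ℝ e) C with hA
  have hAxy : ∀ x y, A (e x) (e y) = C x y := by
    intro x y
    simp [hA, Matrix.reindexAlgEquiv_apply, Matrix.reindex_apply, Matrix.submatrix_apply]
  have hApow : ∀ (k : ℕ) x y, (A ^ k) (e x) (e y) = (C ^ k) x y := by
    intro k x y
    have hk : A ^ k = (Matrix.reindexAlgEquiv ℝ ℝ e) (C ^ k) := by
      rw [hA, ← map_pow]
    rw [hk]
    simp [Matrix.reindexAlgEquiv_apply, Matrix.reindex_apply, Matrix.submatrix_apply]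
  have hBsymm : ∀ i j, B j i = B i j := fun i j => hB.apply i j
  have hCsymm : ∀ x y, C y x = C x y := by
    rintro ((x|x)|x) ((y|y)|y) <;> simp [hC, hBsymm]
  have hAsymm : A.IsSymm := by
    ext i j
    rw [Matrix.transpose_apply]
    have := hAxy (e.symm j) (e.symm i)
    have h2 := hAxy (e.symm i) (e.symm j)
    rw [e.apply_symm_apply, e.apply_symm_apply] at this h2
    rw [this, h2, hCsymm]
  have hA0 : ∀ i j, 0 ≤ A i j := by
    intro i j
    have := hAxy (e.symm i) (e.symm j)
    rw [e.apply_symm_apply, e.apply_symm_apply] at this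
    rw [this]
    rcases e.symm i with (x|x)|x <;> rcases e.symm j with (y|y)|y <;>
      simp [hC, hB0, le_refl]
  have hfA := h A hAsymm hA0
  -- summability
  obtain ⟨rA, hrA⟩ := pow_entry_bound A
  have hsA : Summable (fun k => a k • A ^ k) := by
    refine summable_entries _ (fun k => |a k| * rA ^ k) (ha rA) ?_
    intro k i j
    have : |(a k • A ^ k) i j| = |a k| * |(A ^ k) i j| := by
      rw [Matrix.smul_apply, smul_eq_mul, abs_mul]
    rw [this]
    exact mul_le_mul_of_nonneg_left (hrA k i j) (abs_nonneg _)
  obtain ⟨rB, hrB⟩ := pow_entry_bound B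
  have h2inj : Function.Injective (fun c : ℕ => 2 * c) := fun x y hxy => by
    have hxy' : 2 * x = 2 * y := hxy; omega
  have h2inj' : Function.Injective (fun c : ℕ => 2 * c + 1) := fun x y hxy => by
    have hxy' : 2 * x + 1 = 2 * y + 1 := hxy; omega
  have hsE : Summable (fun k => a (2 * k) • B ^ (2 * k)) := by
    refine summable_entries _ (fun k => |a (2 * k)| * rB ^ (2 * k))
      ((ha rB).comp_injective h2inj) ?_
    intro k i j
    rw [show |(a (2*k) • B ^ (2*k)) i j| = |a (2*k)| * |(B ^ (2*k)) i j| by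
      rw [Matrix.smul_apply, smul_eq_mul, abs_mul]]
    exact mul_le_mul_of_nonneg_left (hrB (2*k) i j) (abs_nonneg _)
  have hsO : Summable (fun k => a (2 * k + 1) • B ^ (2 * k + 1)) := by
    refine summable_entries _ (fun k => |a (2 * k + 1)| * rB ^ (2 * k + 1))
      ((ha rB).comp_injective h2inj') ?_
    intro k i j
    rw [show |(a (2*k+1) • B ^ (2*k+1)) i j| = |a (2*k+1)| * |(B ^ (2*k+1)) i j| by
      rw [Matrix.smul_apply, smul_eq_mul, abs_mul]]
    exact mul_le_mul_of_nonneg_left (hrB (2*k+1) i j) (abs_nonneg _)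
  have hfmatA : ∀ u v, fmat a A u v = ∑' k, a k * (A ^ k) u v := by
    intro u v
    rw [fmat, tsum_matrix_apply _ hsA]
    exact tsum_congr fun k => by rw [Matrix.smul_apply, smul_eq_mul]
  constructor
  · intro i j
    have heq : fmatEven a B i j
        = fmat a A (e (.inl (.inl i))) (e (.inl (.inl j))) := by
      rw [hfmatA, fmatEven, tsum_matrix_apply _ hsE]
      have hterm : ∀ c : ℕ, (a (2 * c) • B ^ (2 * c)) i j
          = a (2 * c) * (A ^ (2 * c)) (e (.inl (.inl i))) (e (.inl (.inl j))) := by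
        intro c
        rw [Matrix.smul_apply, smul_eq_mul, hApow, (blockC_pow B (2 * c)).1,
          if_pos (even_two_mul c)]
      rw [tsum_congr hterm]
      exact Function.Injective.tsum_eq
        (f := fun b => a b * (A ^ b) (e (.inl (.inl i))) (e (.inl (.inl j)))) h2inj (by
        intro b hb
        rw [Function.mem_support] at hb
        rcases Nat.even_or_odd b with he | ho
        · obtain ⟨c, hc⟩ := he
          exact ⟨c, show 2 * c = b by omega⟩
        · exfalso
          apply hb
          rw [hApow, (blockC_pow B b).1, if_neg (Nat.not_even_iff_odd.mpr ho),
            mul_zero])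
    rw [heq]
    exact hfA _ _
  · intro i j
    have heq : fmatOdd a B i j
        = fmat a A (e (.inl (.inl i))) (e (.inl (.inr j))) := by
      rw [hfmatA, fmatOdd, tsum_matrix_apply _ hsO]
      have hterm : ∀ c : ℕ, (a (2 * c + 1) • B ^ (2 * c + 1)) i j
          = a (2 * c + 1) * (A ^ (2 * c + 1)) (e (.inl (.inl i))) (e (.inl (.inr j))) := by
        intro c
        rw [Matrix.smul_apply, smul_eq_mul, hApow, (blockC_pow B (2 * c + 1)).2,
          if_neg (by simp [Nat.even_add_one, even_two_mul])]
      rw [tsum_congr hterm]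
      exact Function.Injective.tsum_eq
        (f := fun b => a b * (A ^ b) (e (.inl (.inl i))) (e (.inl (.inr j)))) h2inj' (by
        intro b hb
        rw [Function.mem_support] at hb
        rcases Nat.even_or_odd b with he | ho
        · exfalso
          apply hb
          rw [hApow, (blockC_pow B b).2, if_pos he, mul_zero]
        · obtain ⟨c, hc⟩ := ho
          exact ⟨c, show 2 * c + 1 = b by omega⟩)
    rw [heq]
    exact hfA _ _
end

section
/- Let n ≥ 2, let a_1, …, a_n be reals, and let A be the n×n symmetric anti-bidiagonal matrix with A_{i,j} = a_{|i−j|+1} when i+j = n+1 or i+j = n+2, and A_{i,j} = 0 otherwise (indices 1-based). Then for every q ≥ 1: (a) the (i,j) entry of A^{2q−1} is zero whenever 2 ≤ i+j ≤ n−q+1; (b) the (i,j) entry of A^{2q} is zero whenever 1+q ≤ j−i ≤ n−1; (c) (A^{2q−1})_{1, n−q+1} = a_n·a_{n−1}⋯a_{n−2q+2} for 1 ≤ q ≤ ⌊(n+1)/2⌋, and (A^{2q})_{1, 1+q} = a_n·a_{n−1}⋯a_{n−2q+1} for 1 ≤ q ≤ ⌊n/2⌋. -/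
/-!
Column `k` of an anti-bidiagonal `A` is supported on rows `n - 1 - k` and `n - k`, so right
multiplication by `A` moves an entry of row `i` from column `k` to columns `n - 1 - k` and
`n - k`. Inductively, row `i` of `A ^ (2q+1)` vanishes in the columns `j ≤ n - q - 2 - i` and
row `i` of `A ^ (2q+2)` in the columns `j ≥ i + q + 2`. At the corner entries of row `0` this
leaves a single term in each matrix product: the path `0 → n-1 → 1 → n-2 → 2 → ⋯`, whose
`m`-th step picks up `a (n - m + 1)`.
-/

open Finset

namespace Matrix

variable {R : Type*} {n : ℕ}

/-- With 0-based indices the support `i + j ∈ {n + 1, n + 2}` becomes `i + j ∈ {n - 1, n}`. -/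
def IsAntiBidiagonal [Zero R] (A : Matrix (Fin n) (Fin n) R) : Prop :=
  ∀ i j : Fin n, (i : ℕ) + j ≠ n - 1 → (i : ℕ) + j ≠ n → A i j = 0

def symmAntiBidiagonal [Zero R] (n : ℕ) (a : ℕ → R) : Matrix (Fin n) (Fin n) R :=
  of fun i j => if (i : ℕ) + j = n - 1 ∨ (i : ℕ) + j = n then a (Nat.dist i j + 1) else 0

theorem isAntiBidiagonal_symmAntiBidiagonal [Zero R] (a : ℕ → R) :
    (symmAntiBidiagonal n a).IsAntiBidiagonal :=
  fun i j h₁ h₂ => by simp [symmAntiBidiagonal, h₁, h₂]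

theorem symmAntiBidiagonal_apply_of_add [Zero R] (a : ℕ → R) {i j : Fin n}
    (h : (i : ℕ) + j = n - 1 ∨ (i : ℕ) + j = n) :
    symmAntiBidiagonal n a i j = a (Nat.dist i j + 1) := by
  simp [symmAntiBidiagonal, h]

namespace IsAntiBidiagonal

variable [Semiring R] {A : Matrix (Fin n) (Fin n) R}

theorem mul_apply_eq_zero (hA : A.IsAntiBidiagonal) {M : Matrix (Fin n) (Fin n) R}
    {i j : Fin n} (hM : ∀ k : Fin n, (k : ℕ) + j = n - 1 ∨ (k : ℕ) + j = n → M i k = 0) :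
    (M * A) i j = 0 := by
  rw [mul_apply]
  refine Finset.sum_eq_zero fun k _ => ?_
  by_cases hk : (k : ℕ) + j = n - 1 ∨ (k : ℕ) + j = n
  · rw [hM k hk, zero_mul]
  · rw [hA k j (fun h => hk (.inl h)) (fun h => hk (.inr h)), mul_zero]

theorem mul_apply_eq_single (hA : A.IsAntiBidiagonal) {M : Matrix (Fin n) (Fin n) R}
    {i j : Fin n} (k₀ : Fin n)
    (hM : ∀ k : Fin n, (k : ℕ) ≠ k₀ →
      (k : ℕ) + j = n - 1 ∨ (k : ℕ) + j = n → M i k = 0) :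
    (M * A) i j = M i k₀ * A k₀ j := by
  rw [mul_apply]
  refine Finset.sum_eq_single k₀ (fun k _ hk => ?_) fun h => absurd (mem_univ k₀) h
  by_cases hkj : (k : ℕ) + j = n - 1 ∨ (k : ℕ) + j = n
  · rw [hM k (Fin.val_ne_of_ne hk) hkj, zero_mul]
  · rw [hA k j (fun h => hkj (.inl h)) (fun h => hkj (.inr h)), mul_zero]

theorem pow_odd_apply_eq_zero (hA : A.IsAntiBidiagonal) (q : ℕ) :
    ∀ i j : Fin n, (i : ℕ) + j + q + 2 ≤ n → (A ^ (2 * q + 1)) i j = 0 := by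
  induction q with
  | zero => exact fun i j h => by simpa using hA i j (by omega) (by omega)
  | succ q ih =>
    intro i j h
    rw [show 2 * (q + 1) + 1 = 2 * q + 1 + 1 + 1 by ring, pow_succ, pow_succ]
    exact hA.mul_apply_eq_zero fun k hk => hA.mul_apply_eq_zero fun l hl => ih i l (by omega)

theorem pow_even_apply_eq_zero (hA : A.IsAntiBidiagonal) (q : ℕ) (i j : Fin n)
    (h : (i : ℕ) + q + 2 ≤ j) :
    (A ^ (2 * q + 2)) i j = 0 := by
  rw [pow_succ]
  exact hA.mul_apply_eq_zero fun k hk => hA.pow_odd_apply_eq_zero q i k (by omega)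

end IsAntiBidiagonal

section CommSemiring

variable [CommSemiring R] (a : ℕ → R)

theorem symmAntiBidiagonal_pow_even_apply_zero_eq_mul {q : ℕ} (hq : 2 * q + 2 ≤ n) :
    (symmAntiBidiagonal n a ^ (2 * q + 2)) ⟨0, by omega⟩ ⟨q + 1, by omega⟩ =
      (symmAntiBidiagonal n a ^ (2 * q + 1)) ⟨0, by omega⟩ ⟨n - (q + 1), by omega⟩ *
        a (n - (2 * q + 1)) := by
  have hA := isAntiBidiagonal_symmAntiBidiagonal a (n := n)
  rw [pow_succ, hA.mul_apply_eq_single ⟨n - (q + 1), by omega⟩ fun k hk hkj =>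
      hA.pow_odd_apply_eq_zero q _ k (by simp only at hk hkj ⊢; omega),
    symmAntiBidiagonal_apply_of_add a (by simp only; omega)]
  simp only [Nat.dist_eq_sub_of_le_right (show q + 1 ≤ n - (q + 1) by omega)]
  congr 2
  omega

theorem symmAntiBidiagonal_pow_odd_apply_zero_eq_mul {q : ℕ} (hq : 2 * q + 3 ≤ n) :
    (symmAntiBidiagonal n a ^ (2 * q + 3)) ⟨0, by omega⟩ ⟨n - (q + 2), by omega⟩ =
      (symmAntiBidiagonal n a ^ (2 * q + 2)) ⟨0, by omega⟩ ⟨q + 1, by omega⟩ *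
        a (n - (2 * q + 2)) := by
  have hA := isAntiBidiagonal_symmAntiBidiagonal a (n := n)
  rw [pow_succ, hA.mul_apply_eq_single ⟨q + 1, by omega⟩ fun k hk hkj =>
      hA.pow_even_apply_eq_zero q _ k (by simp only at hk hkj ⊢; omega),
    symmAntiBidiagonal_apply_of_add a (by simp only; omega)]
  simp only [Nat.dist_eq_sub_of_le (show q + 1 ≤ n - (q + 2) by omega)]
  congr 2
  omega

theorem symmAntiBidiagonal_pow_odd_apply_zero {q : ℕ} (hq : 2 * q + 1 ≤ n) :
    (symmAntiBidiagonal n a ^ (2 * q + 1)) ⟨0, by omega⟩ ⟨n - (q + 1), by omega⟩ =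
      ∏ i ∈ range (2 * q + 1), a (n - i) := by
  induction q with
  | zero =>
    rw [pow_one, symmAntiBidiagonal_apply_of_add a (by simp only; omega)]
    simp [Nat.dist_eq_sub_of_le, Nat.sub_add_cancel (show 1 ≤ n by omega)]
  | succ q ih =>
    have h := symmAntiBidiagonal_pow_odd_apply_zero_eq_mul a (q := q) (by omega)
    rw [symmAntiBidiagonal_pow_even_apply_zero_eq_mul a (by omega), ih (by omega),
      ← prod_range_succ, ← prod_range_succ] at h
    exact h

theorem symmAntiBidiagonal_pow_even_apply_zero {q : ℕ} (hq : 2 * q + 2 ≤ n) :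
    (symmAntiBidiagonal n a ^ (2 * q + 2)) ⟨0, by omega⟩ ⟨q + 1, by omega⟩ =
      ∏ i ∈ range (2 * q + 2), a (n - i) := by
  rw [symmAntiBidiagonal_pow_even_apply_zero_eq_mul a hq,
    symmAntiBidiagonal_pow_odd_apply_zero a (by omega)]
  exact (prod_range_succ _ _).symm

end CommSemiring

end Matrix

/-- Pattern of powers of a symmetric anti-bidiagonal matrix `A` (1-based
entries `A_{i,j} = a_{|i-j|+1}` when `i+j = n+1` or `i+j = n+2`, zero
otherwise; here realized 0-based over `Fin n`):
(a) `(A^{2q-1})_{i,j} = 0` whenever `2 ≤ i+j ≤ n-q+1` (1-based);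
(b) `(A^{2q})_{i,j} = 0` whenever `1+q ≤ j-i ≤ n-1` (1-based);
(c) `(A^{2q-1})_{1,n-q+1} = a_n a_{n-1} ⋯ a_{n-2q+2}` for `1 ≤ q ≤ ⌊(n+1)/2⌋`,
and `(A^{2q})_{1,1+q} = a_n a_{n-1} ⋯ a_{n-2q+1}` for `1 ≤ q ≤ ⌊n/2⌋`. -/
theorem stmt_18 (n : ℕ) (a : ℕ → ℝ)
    (A : Matrix (Fin n) (Fin n) ℝ)
    (hA : ∀ i j : Fin n,
      A i j = if (i : ℕ) + (j : ℕ) = n - 1 ∨ (i : ℕ) + (j : ℕ) = n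
        then a (Nat.dist (i : ℕ) (j : ℕ) + 1) else 0) :
    (∀ q : ℕ, 1 ≤ q → ∀ i j : Fin n,
      (i : ℕ) + (j : ℕ) + 2 ≤ n - q + 1 → (A ^ (2 * q - 1)) i j = 0) ∧
    (∀ q : ℕ, 1 ≤ q → ∀ i j : Fin n,
      (i : ℕ) + q + 1 ≤ (j : ℕ) → (A ^ (2 * q)) i j = 0) ∧
    (∀ q : ℕ, (hq1 : 1 ≤ q) → (hq2 : q ≤ (n + 1) / 2) →
      (A ^ (2 * q - 1)) ⟨0, by omega⟩ ⟨n - q, by omega⟩ =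
        ∏ i ∈ Finset.range (2 * q - 1), a (n - i)) ∧
    (∀ q : ℕ, (hq1 : 1 ≤ q) → (hq2 : q ≤ n / 2) →
      (A ^ (2 * q)) ⟨0, by omega⟩ ⟨q, by omega⟩ =
        ∏ i ∈ Finset.range (2 * q), a (n - i)) := by
  obtain rfl : A = Matrix.symmAntiBidiagonal n a := Matrix.ext hA
  have hsupp := Matrix.isAntiBidiagonal_symmAntiBidiagonal a (n := n)
  refine ⟨?_, ?_, ?_, ?_⟩ <;> rintro (_ | q) hq <;> try omega
  · rw [show 2 * (q + 1) - 1 = 2 * q + 1 by omega]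
    exact fun i j h => hsupp.pow_odd_apply_eq_zero q i j (by omega)
  · exact hsupp.pow_even_apply_eq_zero q
  · rw [show 2 * (q + 1) - 1 = 2 * q + 1 by omega]
    exact fun _ => Matrix.symmAntiBidiagonal_pow_odd_apply_zero a (by omega)
  · exact fun _ => Matrix.symmAntiBidiagonal_pow_even_apply_zero a (by omega)
end
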